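/- arXiv:1108.1671 — 7 statements merged into one kernel-verified Lean document; each statement's English description precedes it below -/
import Mathlib

section
/- Let k ≥ 2, let G ⊆ R_k, and let n ≥ 2. Then Pol(G) contains a near-unanimity function of arity n+1 if and only if every essential predicate in [G] has arity at most n, i.e., ar([G] ∩ R̃_k) ≤ n. -/
/-- Tuples over `E_k = Fin k`. -/
abbrev Tuple (k n : ℕ) := Fin n → Fin k

/-- A predicate on `E_k`: an arity together with a set of tuples of that arity. -/
abbrev Pred (k : ℕ) := Σ n : ℕ, Set (Tuple k n)

/-- The binary equality predicate `σ_k^=`. -/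
def eqPred (k : ℕ) : Pred k := ⟨2, {t | t 0 = t 1}⟩

/-- The 0-ary predicate `false`. -/
def falsePred (k : ℕ) : Pred k := ⟨0, ∅⟩

/-- `[S]`: primitive positive closure of a set of predicates. -/
def ppClosure (k : ℕ) (S : Set (Pred k)) : Set (Pred k) :=
  { ρ | ∃ (l s : ℕ) (σ : Fin s → Pred k)
      (z : (i : Fin s) → Fin (σ i).1 → Fin (ρ.1 + l)),
      (∀ i, σ i ∈ S ∪ {eqPred k, falsePred k}) ∧
      ∀ x : Tuple k ρ.1, x ∈ ρ.2 ↔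
        ∃ y : Tuple k l, ∀ i, (fun j => Fin.append x y (z i j)) ∈ (σ i).2 }

/-- `AND(S)`: quantifier-free conjunctions of predicates of `S`, with no
repeated variable inside a single conjunct. -/
def andClosure (k : ℕ) (S : Set (Pred k)) : Set (Pred k) :=
  { ρ | ∃ (s : ℕ) (σ : Fin s → Pred k)
      (z : (i : Fin s) → Fin (σ i).1 → Fin ρ.1),
      (∀ i, σ i ∈ S) ∧ (∀ i, Function.Injective (z i)) ∧
      ∀ x : Tuple k ρ.1, x ∈ ρ.2 ↔ ∀ i, (fun j => x (z i j)) ∈ (σ i).2 }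

/-- An essential predicate: not a conjunction of predicates of smaller arity. -/
def Essential (k : ℕ) (ρ : Pred k) : Prop :=
  ρ ∉ andClosure k { σ : Pred k | σ.1 < ρ.1 }

/-- `f` preserves the predicate `ρ`. -/
def Preserves {k m : ℕ} (f : Tuple k m → Fin k) (ρ : Pred k) : Prop :=
  ∀ α : Fin m → Tuple k ρ.1, (∀ i, α i ∈ ρ.2) →
    (fun j => f fun i => α i j) ∈ ρ.2

/-- `f` is a near-unanimity function. -/
def IsNUF {k n : ℕ} (f : Tuple k n → Fin k) : Prop :=
  ∀ x y : Fin k, ∀ i : Fin n, f (Function.update (fun _ => y) i x) = y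

/-- `Pol(G)` contains a near-unanimity function of arity `n`. -/
def HasNUF (k : ℕ) (G : Set (Pred k)) (n : ℕ) : Prop :=
  ∃ f : Tuple k n → Fin k, IsNUF f ∧ ∀ ρ ∈ G, Preserves f ρ

/-- `SR_k`: the unary singleton predicates `ρ_{=,a}`. -/
def SR (k : ℕ) : Set (Pred k) := { ρ | ∃ a : Fin k, ρ = ⟨1, {t | t 0 = a}⟩ }

/-- The unary predicate `(x ∈ C)`. -/
def memPred (k : ℕ) (C : Set (Fin k)) : Pred k := ⟨1, { t | t 0 ∈ C }⟩

/-- `Strike(ρ)`: predicates obtained from `ρ` by existentially quantifying some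
coordinates and injectively renaming the rest. -/
def strike (k : ℕ) (ρ : Pred k) : Set (Pred k) :=
  { ρ' | ∃ (l : ℕ) (z : Fin ρ.1 → Fin (ρ'.1 + l)),
      Function.Injective z ∧
      ∀ x : Tuple k ρ'.1, x ∈ ρ'.2 ↔
        ∃ y : Tuple k l, (fun j => Fin.append x y (z j)) ∈ ρ.2 }

/-- The tuple `(d, e, α)`. -/
def pre2 {k m : ℕ} (d e : Fin k) (α : Tuple k m) : Tuple k (m + 2) :=
  Fin.cons d (Fin.cons e α)

/-- The `(m+2)`-ary chain predicate
`ρ(x_1,…,x_n) = ∃y_1…y_{n-1}, fst(x_1,y_1) ∧ ⋀ mid_i(y_i,x_{i+1},y_{i+1}) ∧ lst(y_{n-1},x_n)`. -/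
def chainPred (k m : ℕ) (fst lst : Set (Tuple k 2))
    (mid : Fin m → Set (Tuple k 3)) : Pred k :=
  ⟨m + 2, { x | ∃ y : Tuple k (m + 1),
      ![x 0, y 0] ∈ fst ∧
      (∀ i : Fin m, ![y i.castSucc, x i.succ.castSucc, y i.succ] ∈ mid i) ∧
      ![y (Fin.last m), x (Fin.last (m + 1))] ∈ lst }⟩
/-!
An `(n+1)`-ary near-unanimity polymorphism `f` makes every predicate `ρ ∈ [G]` of arity `m > n`
the conjunction of its `m` projections forgetting one coordinate: if `x` lies in all of them,
with witnesses `u₀, …, u_m ∈ ρ`, then applying `f` to `u₀, …, u_n` gives `x`, because at every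
coordinate at most one argument differs from `x`. So no such `ρ` is essential.

Conversely, if every essential predicate of `[G]` has arity at most `n`, then by induction on the
arity every predicate of `[G]` contains each tuple all of whose projections to at most `n`
coordinates extend to members of the predicate. Apply this to the predicate of `[G]` formed by
the restrictions of the `(n+1)`-ary polymorphisms of `G` to the near-unanimous tuples
`(b, …, a, …, b)`, and to the tuple prescribing the value `b` on each of them: at most `n`
such tuples leave some position `c` unused, and the projection to `c` is a polymorphism with
the prescribed values there. The resulting polymorphism is a near-unanimity function.
-/

open Function

section Polymorphisms

variable {k : ℕ}

def projPred (ρ : Pred k) {m : ℕ} (z : Fin m → Fin ρ.1) : Pred k :=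
  ⟨m, (· ∘ z) '' ρ.2⟩

theorem mem_ppClosure_of_iff_of_finite {G : Set (Pred k)} {ρ : Pred k} {ι κ : Type*}
    [Finite ι] [Finite κ] (σ : ι → Pred k) (z : (i : ι) → Fin (σ i).1 → Fin ρ.1 ⊕ κ)
    (hσ : ∀ i, σ i ∈ G ∪ {eqPred k, falsePred k})
    (h : ∀ x : Tuple k ρ.1, x ∈ ρ.2 ↔
      ∃ y : κ → Fin k, ∀ i, (fun j => Sum.elim x y (z i j)) ∈ (σ i).2) :
    ρ ∈ ppClosure k G := by
  let eι := (Finite.equivFin ι).symm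
  let eκ := Finite.equivFin κ
  refine ⟨Nat.card κ, Nat.card ι, σ ∘ eι,
    fun i j => Sum.elim (Fin.castAdd _) (Fin.natAdd _ ∘ eκ) (z (eι i) j), fun i => hσ _,
    fun x => (h x).trans ?_⟩
  have happend (y : Fin (Nat.card κ) → Fin k) (v : Fin ρ.1 ⊕ κ) :
      Fin.append x y (Sum.elim (Fin.castAdd _) (Fin.natAdd _ ∘ eκ) v) = Sum.elim x (y ∘ eκ) v := by
    cases v <;> simp
  simp only [happend, comp_apply]
  exact ⟨fun ⟨y, hy⟩ => ⟨y ∘ eκ.symm, fun i => by simpa [comp_assoc] using hy (eι i)⟩,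
    fun ⟨y, hy⟩ => ⟨y ∘ eκ, eι.forall_congr_right.1 hy⟩⟩

/-- The family of constraints may be infinite: only finitely many of them are distinct, as there
are only finitely many predicates of a given arity. -/
theorem mem_ppClosure_of_iff {G : Set (Pred k)} {ρ : Pred k} {ι κ : Type*} [Finite κ]
    (σ : ι → Pred k) (z : (i : ι) → Fin (σ i).1 → Fin ρ.1 ⊕ κ)
    (hσ : ∀ i, σ i ∈ G ∪ {eqPred k, falsePred k})
    (h : ∀ x : Tuple k ρ.1, x ∈ ρ.2 ↔
      ∃ y : κ → Fin k, ∀ i, (fun j => Sum.elim x y (z i j)) ∈ (σ i).2) :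
    ρ ∈ ppClosure k G := by
  let A (i : ι) : Set (Fin ρ.1 ⊕ κ → Fin k) := {w | (fun j => w (z i j)) ∈ (σ i).2}
  choose r hr using fun S : Set.range A => S.2
  refine mem_ppClosure_of_iff_of_finite (fun S => σ (r S)) (fun S => z (r S)) (fun S => hσ _)
    fun x => (h x).trans (exists_congr fun y => ⟨fun hy S => hy _, fun hy i => ?_⟩)
  have hAi : A (r ⟨A i, i, rfl⟩) = A i := hr _
  change Sum.elim x y ∈ A i
  exact hAi ▸ hy _

theorem projPred_mem_ppClosure {G : Set (Pred k)} {ρ : Pred k} (hρ : ρ ∈ ppClosure k G)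
    {m : ℕ} (z : Fin m → Fin ρ.1) : projPred ρ z ∈ ppClosure k G := by
  obtain ⟨l, s, σ, zρ, hσ, hiff⟩ := hρ
  refine mem_ppClosure_of_iff (κ := Fin (ρ.1 + l)) (Sum.elim σ fun _ : Fin m => eqPred k)
    (fun | .inl i => fun j => .inr (zρ i j)
         | .inr j => ![.inl j, .inr (Fin.castAdd l (z j))])
    (Sum.forall.2 ⟨hσ, fun _ => .inr (.inl rfl)⟩) fun x => ⟨?_, ?_⟩
  · rintro ⟨u, hu, rfl⟩
    obtain ⟨y, hy⟩ := (hiff u).1 hu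
    refine ⟨Fin.append u y, Sum.forall.2 ⟨hy, fun j => ?_⟩⟩
    show u (z j) = Fin.append u y (Fin.castAdd l (z j))
    rw [Fin.append_left]
  · rintro ⟨Y, hY⟩
    refine ⟨fun q => Y (Fin.castAdd l q), (hiff _).2 ⟨fun q => Y (Fin.natAdd _ q), fun i => ?_⟩,
      funext fun j => (hY (.inr j) : x j = Y (Fin.castAdd l (z j))).symm⟩
    rw [Fin.append_castAdd_natAdd]
    exact hY (.inl i)

theorem preserves_eqPred {m : ℕ} (f : Tuple k m → Fin k) : Preserves f (eqPred k) :=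
  fun _ hα => congrArg f (funext hα)

theorem preserves_falsePred {m : ℕ} [NeZero m] (f : Tuple k m → Fin k) :
    Preserves f (falsePred k) :=
  fun _ hα => absurd (hα 0) (Set.notMem_empty _)

theorem preserves_of_mem_ppClosure {m : ℕ} [NeZero m] {f : Tuple k m → Fin k}
    {G : Set (Pred k)} (hf : ∀ ρ ∈ G, Preserves f ρ) {ρ : Pred k} (hρ : ρ ∈ ppClosure k G) :
    Preserves f ρ := by
  obtain ⟨l, s, σ, z, hσ, hiff⟩ := hρ
  have hfσ (i : Fin s) : Preserves f (σ i) := by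
    rcases hσ i with h | h | h
    · exact hf _ h
    · exact h ▸ preserves_eqPred f
    · exact (Set.mem_singleton_iff.1 h) ▸ preserves_falsePred f
  intro α hα
  choose y hy using fun i => (hiff (α i)).1 (hα i)
  have happend (v : Fin (ρ.1 + l)) : Fin.append (fun j => f fun i => α i j)
      (fun q => f fun i => y i q) v = f fun i => Fin.append (α i) (y i) v := by
    cases v using Fin.addCases <;> simp
  refine (hiff _).2 ⟨fun q => f fun i => y i q, fun c => ?_⟩
  simp only [happend]
  exact hfσ c _ fun i => hy i c

theorem preserves_eval {m : ℕ} (c : Fin m) (ρ : Pred k) : Preserves (fun t : Tuple k m => t c) ρ :=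
  fun _ hα => hα c

/-- The `N`-ary polymorphisms of `G`, as a predicate of arity `k ^ N` indexed by the
`N`-tuples. -/
def polyPred (k N : ℕ) (G : Set (Pred k)) : Pred k :=
  ⟨k ^ N, {w | ∀ ρ ∈ G, Preserves (w ∘ finFunctionFinEquiv) ρ}⟩

theorem polyPred_mem_ppClosure (N : ℕ) (G : Set (Pred k)) : polyPred k N G ∈ ppClosure k G := by
  refine mem_ppClosure_of_iff (κ := Empty)
    (ι := Σ ρ : G, {α : Fin N → Tuple k ρ.1.1 // ∀ i, α i ∈ ρ.1.2})
    (fun a => a.1) (fun a j => .inl (finFunctionFinEquiv fun i => a.2.1 i j))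
    (fun a => .inl a.1.2) fun w =>
    ⟨fun hw => ⟨isEmptyElim, fun ⟨⟨ρ, hρ⟩, α, hα⟩ => hw ρ hρ α hα⟩,
      fun ⟨_, hy⟩ ρ hρ α hα => hy ⟨⟨ρ, hρ⟩, α, hα⟩⟩

theorem IsNUF.apply_eq {N : ℕ} {f : Tuple k N → Fin k} (hf : IsNUF f) {a : Tuple k N}
    {y : Fin k} (i : Fin N) (ha : ∀ j ≠ i, a j = y) : f a = y := by
  have : update (fun _ => y) i (a i) = a := update_eq_iff.2 ⟨rfl, fun j hj => (ha j hj).symm⟩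
  rw [← this]
  exact hf _ _ _

theorem mem_andClosure_of_preserves_nuf {n m : ℕ} {f : Tuple k (n + 1) → Fin k} (hf : IsNUF f)
    {R : Set (Tuple k (m + 1))} (hR : Preserves f ⟨m + 1, R⟩) (hnm : n ≤ m) :
    (⟨m + 1, R⟩ : Pred k) ∈ andClosure k {σ | σ.1 < m + 1} := by
  refine ⟨m + 1, fun i => projPred ⟨m + 1, R⟩ i.succAbove, fun i => i.succAbove,
    fun _ => m.lt_succ_self, fun _ => Fin.succAbove_right_injective,
    fun x => ⟨fun hx _ => ⟨x, hx, rfl⟩, fun hx => ?_⟩⟩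
  choose u hu hux using hx
  have hu_off (i j : Fin (m + 1)) (hji : j ≠ i) : u i j = x j := by
    obtain ⟨j', rfl⟩ := Fin.exists_succAbove_eq hji
    exact congrFun (hux i) j'
  let ι : Fin (n + 1) → Fin (m + 1) := Fin.castLE (by omega)
  convert hR (fun i => u (ι i)) fun i => hu _ with j
  obtain ⟨i₀, hi₀⟩ : ∃ i₀, ∀ i ≠ i₀, ι i ≠ j := by
    by_cases hj : ∃ i, ι i = j
    · obtain ⟨i₀, rfl⟩ := hj
      exact ⟨i₀, fun i hi => (Fin.castLE_injective _).ne hi⟩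
    · exact ⟨0, fun i _ hi => hj ⟨i, hi⟩⟩
  exact (hf.apply_eq i₀ fun i hi => hu_off _ _ (hi₀ i hi).symm).symm

theorem arity_le_of_hasNUF {G : Set (Pred k)} {n : ℕ} (hG : HasNUF k G (n + 1)) {ρ : Pred k}
    (hρ : ρ ∈ ppClosure k G) (hess : Essential k ρ) : ρ.1 ≤ n := by
  obtain ⟨f, hf, hfG⟩ := hG
  obtain ⟨_ | m, R⟩ := ρ
  · exact Nat.zero_le n
  by_contra! hnm
  exact hess (mem_andClosure_of_preserves_nuf hf (preserves_of_mem_ppClosure hfG hρ)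
    (Nat.le_of_lt_succ hnm))

theorem mem_of_forall_extends {G : Set (Pred k)} {n : ℕ}
    (H : ∀ ρ ∈ ppClosure k G, Essential k ρ → ρ.1 ≤ n) {ρ : Pred k} (hρ : ρ ∈ ppClosure k G)
    {x : Tuple k ρ.1}
    (hx : ∀ m ≤ n, ∀ z : Fin m → Fin ρ.1, Injective z → ∃ u ∈ ρ.2, u ∘ z = x ∘ z) :
    x ∈ ρ.2 := by
  by_cases hle : ρ.1 ≤ n
  · obtain ⟨u, hu, hux⟩ := hx ρ.1 hle id injective_id
    exact (show u = x from hux) ▸ hu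
  obtain ⟨s, σ, z, hσ, hz, hiff⟩ : ρ ∈ andClosure k {σ | σ.1 < ρ.1} := not_not.1 (mt (H ρ hρ) hle)
  refine (hiff x).2 fun i => ?_
  have hxi : x ∘ z i ∈ (projPred ρ (z i)).2 :=
    mem_of_forall_extends H (projPred_mem_ppClosure hρ (z i)) fun m hm w hw => by
      obtain ⟨u, hu, hux⟩ := hx m hm _ ((hz i).comp hw)
      exact ⟨u ∘ z i, ⟨u, hu, rfl⟩, hux⟩
  obtain ⟨u, hu, hux⟩ := hxi
  exact (show (fun j => u (z i j)) = fun j => x (z i j) from hux) ▸ (hiff u).1 hu i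
termination_by ρ.1
decreasing_by exact hσ i

theorem hasNUF_of_forall_essential_arity_le {G : Set (Pred k)} {n : ℕ}
    (H : ∀ ρ ∈ ppClosure k G, Essential k ρ → ρ.1 ≤ n) : HasNUF k G (n + 1) := by
  let e : Tuple k (n + 1) ≃ Fin (k ^ (n + 1)) := finFunctionFinEquiv
  let idx := (Finite.equivFin (Fin k × Fin k × Fin (n + 1))).symm
  let nu (p : Fin k × Fin k × Fin (n + 1)) : Tuple k (n + 1) := update (fun _ => p.2.1) p.2.2 p.1
  let c (q : Fin _) : Fin (k ^ (n + 1)) := e (nu (idx q))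
  have hv : (fun q => (idx q).2.1) ∈ (projPred (polyPred k (n + 1) G) c).2 := by
    refine mem_of_forall_extends H (projPred_mem_ppClosure (polyPred_mem_ppClosure _ G) c)
      fun m hm z _ => ?_
    obtain ⟨c₀, hc₀⟩ : ∃ c₀, c₀ ∉ Set.range fun j => (idx (z j)).2.2 := by
      by_contra! h
      have := Fintype.card_le_of_surjective _ h
      simp only [Fintype.card_fin] at this
      omega
    have hproj : (fun r => e.symm r c₀) ∈ (polyPred k (n + 1) G).2 := fun ρ _ => by
      convert preserves_eval c₀ ρ with t
      exact congrFun (e.symm_apply_apply t) c₀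
    refine ⟨(fun r => e.symm r c₀) ∘ c, ⟨_, hproj, rfl⟩, funext fun j => ?_⟩
    change e.symm (e (nu (idx (z j)))) c₀ = (idx (z j)).2.1
    rw [e.symm_apply_apply]
    exact update_of_ne (fun h => hc₀ ⟨j, h.symm⟩) _ _
  obtain ⟨w, hw, hwv⟩ := hv
  refine ⟨w ∘ e, fun a b i => ?_, hw⟩
  have hwv' : w (e (nu (idx (idx.symm (a, b, i))))) = (idx (idx.symm (a, b, i))).2.1 :=
    congrFun hwv _
  rwa [idx.apply_symm_apply] at hwv'

end Polymorphisms

theorem nuf_iff_essential_arity_le_general (k : ℕ) (G : Set (Pred k)) (n : ℕ) :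
    HasNUF k G (n + 1) ↔ ∀ ρ ∈ ppClosure k G, Essential k ρ → ρ.1 ≤ n :=
  ⟨fun hG _ hρ hess => arity_le_of_hasNUF hG hρ hess, hasNUF_of_forall_essential_arity_le⟩

theorem nuf_iff_essential_arity_le (k : ℕ) (hk : 2 ≤ k) (G : Set (Pred k))
    (n : ℕ) (hn : 2 ≤ n) :
    HasNUF k G (n + 1) ↔ ∀ ρ ∈ ppClosure k G, Essential k ρ → ρ.1 ≤ n :=
  nuf_iff_essential_arity_le_general k G n
end

section
/- Let k ≥ 2, let G ⊆ R_k, let ρ ∈ R̃_k be an essential predicate of arity n with n > 2^(2k²)+2, and suppose there are predicates ρ_1,…,ρ_n ∈ [G] (ρ_1 and ρ_n binary, ρ_2,…,ρ_{n−1} ternary) with ρ(x_1,…,x_n) = ∃y_1∃y_2…∃y_{n−1} ρ_1(x_1,y_1) ∧ ρ_2(y_1,x_2,y_2) ∧ ρ_3(y_2,x_3,y_3) ∧ … ∧ ρ_{n−1}(y_{n−2},x_{n−1},y_{n−1}) ∧ ρ_n(y_{n−1},x_n). Then the set [G] ∩ R̃_k of essential predicates in [G] is infinite. -/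
/-!
A predicate is essential iff some tuple lies outside it while each single coordinate can be
changed to bring it inside. For the chain predicate, read such a tuple as a chain of binary
relations `mid i (·, xᵢ₊₁, ·)` between `fst(x₀, ·)` and `lst(·, xₙ₋₁)`. Whether a chain cut in two
is satisfiable depends only on the set of values of the cut variable reachable from the left end
and the set of values from which the right end is reachable. With more than `2 ^ (2k)` cut points
two of them carry the same pair of sets, and the block of relations between them can be repeated
any number of times without destroying the witness. The repeated chains are pp-definable from `G`
and essential of unbounded arity.
-/

/-- `ppClosure` with arbitrary finite types indexing the quantified variables and the conjuncts. -/
def ppClosureFintype (k : ℕ) (S : Set (Pred k)) : Set (Pred k) :=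
  { ρ | ∃ (J : Type) (_ : Fintype J) (I : Type) (_ : Fintype I)
      (σ : I → Pred k) (z : (i : I) → Fin (σ i).1 → Fin ρ.1 ⊕ J),
      (∀ i, σ i ∈ S ∪ {eqPred k, falsePred k}) ∧
      ∀ x : Tuple k ρ.1, x ∈ ρ.2 ↔
        ∃ y : J → Fin k, ∀ i, (fun j => Sum.elim x y (z i j)) ∈ (σ i).2 }

lemma Fin.append_finSumFinEquiv {α : Type*} {m n : ℕ} (x : Fin m → α) (y : Fin n → α)
    (s : Fin m ⊕ Fin n) : Fin.append x y (finSumFinEquiv s) = Sum.elim x y s := by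
  cases s <;> simp

lemma ppClosureFintype_eq (k : ℕ) (S : Set (Pred k)) : ppClosureFintype k S = ppClosure k S := by
  ext ρ
  constructor
  · rintro ⟨J, _, I, _, σ, z, hσ, hρ⟩
    let eJ := Fintype.equivFin J
    let eI := Fintype.equivFin I
    refine ⟨Fintype.card J, Fintype.card I, σ ∘ eI.symm,
      fun i j => finSumFinEquiv (Sum.map id eJ (z (eI.symm i) j)), fun i => hσ _, fun x => ?_⟩
    have hz : ∀ y i j, Fin.append x y (finSumFinEquiv (Sum.map id eJ (z i j)))
        = Sum.elim x (y ∘ eJ) (z i j) := by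
      intro y i j
      rw [Fin.append_finSumFinEquiv]
      cases z i j <;> rfl
    simp only [hz, hρ, Function.comp_apply]
    rw [(eJ.arrowCongr (Equiv.refl (Fin k))).exists_congr_left]
    refine exists_congr fun y => eI.symm.forall_congr_right.symm.trans ?_
    simp [Equiv.arrowCongr, Function.comp_def]
  · rintro ⟨l, s, σ, z, hσ, hρ⟩
    refine ⟨Fin l, inferInstance, Fin s, inferInstance, σ,
      fun i j => finSumFinEquiv.symm (z i j), hσ, fun x => ?_⟩
    simp only [hρ, ← Fin.append_finSumFinEquiv, Equiv.apply_symm_apply]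

lemma mem_ppClosureFintype_of_mem {k : ℕ} {T : Set (Pred k)} {σ : Pred k}
    (h : σ ∈ T ∪ {eqPred k, falsePred k}) : σ ∈ ppClosureFintype k T :=
  ⟨Empty, inferInstance, Unit, inferInstance, fun _ => σ, fun _ => Sum.inl, fun _ => h,
    fun _ => ⟨fun hx => ⟨Empty.elim, fun _ => hx⟩, fun ⟨_, hy⟩ => hy ()⟩⟩

/-- Substituting pp-definitions for the atoms of a pp-definition; the quantified variables of the
`i`-th substituted definition become fresh variables indexed by `⟨i, _⟩`. -/
lemma ppClosureFintype_subset {k : ℕ} {S T : Set (Pred k)} (h : S ⊆ ppClosureFintype k T) :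
    ppClosureFintype k S ⊆ ppClosureFintype k T := by
  rintro ρ ⟨J, _, I, _, σ, z, hσ, hρ⟩
  have hσT : ∀ i, σ i ∈ ppClosureFintype k T := fun i =>
    (hσ i).elim (fun hi => h hi) fun hi => mem_ppClosureFintype_of_mem (Or.inr hi)
  choose J' _ I' _ τ w hτ hσiff using hσT
  refine ⟨J ⊕ (Σ i, J' i), inferInstance, Σ i, I' i, inferInstance, fun p => τ p.1 p.2,
    fun p q => Sum.elim (fun a => Sum.map id Sum.inl (z p.1 a))
      (fun b => Sum.inr (Sum.inr ⟨p.1, b⟩)) (w p.1 p.2 q),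
    fun p => hτ p.1 p.2, fun x => ?_⟩
  have hsub : ∀ (Y : J ⊕ (Σ i, J' i) → Fin k) i q,
      Sum.elim x Y (Sum.elim (fun a => Sum.map id Sum.inl (z i a))
        (fun b => Sum.inr (Sum.inr ⟨i, b⟩)) q)
      = Sum.elim (fun j => Sum.elim x (Y ∘ Sum.inl) (z i j)) (fun b => Y (Sum.inr ⟨i, b⟩)) q := by
    intro Y i q
    rcases q with a | b
    · simp only [Sum.elim_inl]
      cases z i a <;> rfl
    · rfl
  simp only [hρ, hσiff, hsub]
  constructor
  · rintro ⟨y, hy⟩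
    choose Y hY using hy
    exact ⟨Sum.elim y fun b => Y b.1 b.2, fun p => hY p.1 p.2⟩
  · rintro ⟨Y, hY⟩
    exact ⟨Y ∘ Sum.inl, fun i => ⟨fun b => Y (Sum.inr ⟨i, b⟩), fun p => hY ⟨i, p⟩⟩⟩

lemma ppClosure_subset_ppClosure_of_subset {k : ℕ} {S T : Set (Pred k)}
    (h : S ⊆ ppClosure k T) : ppClosure k S ⊆ ppClosure k T := by
  simp only [← ppClosureFintype_eq] at h ⊢
  exact ppClosureFintype_subset h

/-- The atoms `fst(x₀, y₀)`, `mid i (yᵢ, xᵢ₊₁, yᵢ₊₁)`, `lst(yₘ, xₘ₊₁)` of `chainPred`. -/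
def chainAtom {k : ℕ} (m : ℕ) (fst lst : Set (Tuple k 2)) (mid : Fin m → Set (Tuple k 3)) :
    Unit ⊕ Fin m ⊕ Unit → Pred k
  | .inl _ => ⟨2, fst⟩
  | .inr (.inl i) => ⟨3, mid i⟩
  | .inr (.inr _) => ⟨2, lst⟩

def chainAtomVars {k : ℕ} (m : ℕ) (fst lst : Set (Tuple k 2)) (mid : Fin m → Set (Tuple k 3)) :
    (i : Unit ⊕ Fin m ⊕ Unit) → Fin (chainAtom m fst lst mid i).1 → Fin (m + 2) ⊕ Fin (m + 1)
  | .inl _ => ![.inl 0, .inr 0]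
  | .inr (.inl i) => ![.inr i.castSucc, .inl i.succ.castSucc, .inr i.succ]
  | .inr (.inr _) => ![.inr (Fin.last m), .inl (Fin.last (m + 1))]

lemma chainPred_mem_ppClosure {k m : ℕ} {S : Set (Pred k)} {fst lst : Set (Tuple k 2)}
    {mid : Fin m → Set (Tuple k 3)} (hfst : ⟨2, fst⟩ ∈ S) (hlst : ⟨2, lst⟩ ∈ S)
    (hmid : ∀ i, ⟨3, mid i⟩ ∈ S) : chainPred k m fst lst mid ∈ ppClosure k S := by
  rw [← ppClosureFintype_eq]
  refine ⟨Fin (m + 1), inferInstance, Unit ⊕ Fin m ⊕ Unit, inferInstance,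
    chainAtom m fst lst mid, chainAtomVars m fst lst mid, ?_, fun (x : Tuple k (m + 2)) => ?_⟩
  · rintro (_ | i | _)
    exacts [Or.inl hfst, Or.inl (hmid i), Or.inl hlst]
  · refine exists_congr fun y => ?_
    simp only [Sum.forall, Unique.forall_iff]
    refine and_congr ?_ (and_congr (forall_congr' fun i => ?_) ?_) <;>
      refine Iff.of_eq (congrArg (· ∈ _) (funext fun j => ?_)) <;> fin_cases j <;> rfl

lemma essential_iff_exists_update {k n : ℕ} {R : Set (Tuple k (n + 1))} :
    Essential k ⟨n + 1, R⟩ ↔ ∃ x ∉ R, ∀ j, ∃ c, Function.update x j c ∈ R := by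
  constructor
  · intro h
    by_contra! hR
    refine h ⟨n + 1, fun j => ⟨n, {u | ∃ β ∈ R, ∀ t, β (j.succAbove t) = u t}⟩,
      fun j => j.succAbove, fun _ => Nat.lt_succ_self n,
      fun _ => Fin.succAbove_right_injective, fun x => ⟨fun hx _ => ⟨x, hx, fun _ => rfl⟩, ?_⟩⟩
    intro hx
    by_contra hxR
    obtain ⟨j, hj⟩ := hR x hxR
    obtain ⟨β, hβ, hβx⟩ := hx j
    have hβ_eq : β = Function.update x j (β j) := by
      refine Function.eq_update_iff.2 ⟨rfl, fun t htj => ?_⟩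
      obtain ⟨t, rfl⟩ := Fin.exists_succAbove_eq htj
      exact hβx t
    exact hj (β j) (hβ_eq ▸ hβ)
  · rintro ⟨x, hxR, hx⟩ ⟨s, σ, z, hσ, -, hR⟩
    obtain ⟨i, hi⟩ : ∃ i, (fun j => x (z i j)) ∉ (σ i).2 := by
      by_contra! h
      exact hxR ((hR x).2 h)
    -- the `i`-th conjunct has too few variables to mention them all
    obtain ⟨j, hj⟩ : ∃ j, ∀ t, z i t ≠ j := by
      by_contra! h
      have := Fintype.card_le_of_surjective _ h
      simp only [Fintype.card_fin] at this
      exact absurd (hσ i) (by simpa using this)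
    obtain ⟨c, hc⟩ := hx j
    have := (hR _).1 hc i
    simp only [Function.update_of_ne (hj _)] at this
    exact hi this

/-- The composite `r₁ ∘ r₂ ∘ ⋯ ∘ rₙ` of a list of relations (read left to right). -/
def relComp {α : Type*} (L : List (α → α → Prop)) : α → α → Prop :=
  L.foldr Relation.Comp (· = ·)

lemma relComp_cons {α : Type*} (r : α → α → Prop) (L : List (α → α → Prop)) :
    relComp (r :: L) = Relation.Comp r (relComp L) := rfl

lemma relComp_append {α : Type*} (L L' : List (α → α → Prop)) :
    relComp (L ++ L') = Relation.Comp (relComp L) (relComp L') := by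
  induction L with
  | nil => exact Relation.eq_comp.symm
  | cons r L ih => rw [List.cons_append, relComp_cons, relComp_cons, ih, Relation.comp_assoc]

lemma relComp_ofFn_iff {α : Type*} {n : ℕ} (f : Fin n → α → α → Prop) (a b : α) :
    relComp (List.ofFn f) a b ↔
      ∃ y : Fin (n + 1) → α, y 0 = a ∧ y (Fin.last n) = b ∧
        ∀ i : Fin n, f i (y i.castSucc) (y i.succ) := by
  induction n generalizing a with
  | zero => exact ⟨fun h => ⟨fun _ => a, rfl, h, nofun⟩, fun ⟨y, h0, hl, _⟩ => h0 ▸ hl⟩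
  | succ n ih =>
    simp only [List.ofFn_succ, relComp_cons, Relation.Comp, ih, Fin.exists_fin_succ_pi,
      Fin.forall_fin_succ, Fin.cons_zero, Fin.cons_succ, ← Fin.succ_last, Fin.castSucc_zero,
      ← Fin.succ_castSucc]
    constructor
    · rintro ⟨_, hf, c, v, rfl, hb, hv⟩
      exact ⟨a, c, v, rfl, hb, hf, hv⟩
    · rintro ⟨_, c, v, rfl, hb, hf, hv⟩
      exact ⟨c, hf, c, v, rfl, hb, hv⟩

/-- A middle atom `mid` of a chain together with the value of its middle variable. -/
abbrev Piece (k : ℕ) := Set (Tuple k 3) × Fin k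

def Piece.rel {k : ℕ} (p : Piece k) (a b : Fin k) : Prop := ![a, p.2, b] ∈ p.1

section Chain

variable {k : ℕ} (fst lst : Set (Tuple k 2))

def ChainSat (P : List (Piece k)) (d e : Fin k) : Prop :=
  ∃ a b, ![d, a] ∈ fst ∧ relComp (P.map Piece.rel) a b ∧ ![b, e] ∈ lst

/-- A chain cut in two is satisfiable iff the profiles of the two halves meet
(`chainSat_append_iff`); there are only `2 ^ k` profiles of each kind. -/
def prefixProfile (d : Fin k) (P : List (Piece k)) : Set (Fin k) :=
  {c | ∃ a, ![d, a] ∈ fst ∧ relComp (P.map Piece.rel) a c}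

def suffixProfile (e : Fin k) (P : List (Piece k)) : Set (Fin k) :=
  {c | ∃ b, relComp (P.map Piece.rel) c b ∧ ![b, e] ∈ lst}

variable {fst lst}

lemma chainSat_append_iff {P Q : List (Piece k)} {d e : Fin k} :
    ChainSat fst lst (P ++ Q) d e ↔ ∃ c, c ∈ prefixProfile fst d P ∧ c ∈ suffixProfile lst e Q := by
  simp only [ChainSat, prefixProfile, suffixProfile, List.map_append, relComp_append,
    Relation.Comp, Set.mem_ofPred_eq]
  constructor
  · rintro ⟨a, b, hd, ⟨c, hac, hcb⟩, he⟩
    exact ⟨c, ⟨a, hd, hac⟩, b, hcb, he⟩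
  · rintro ⟨c, ⟨a, hd, hac⟩, b, hcb, he⟩
    exact ⟨a, b, hd, ⟨c, hac, hcb⟩, he⟩

lemma prefixProfile_append {d : Fin k} {P P' : List (Piece k)}
    (h : prefixProfile fst d P = prefixProfile fst d P') (Q : List (Piece k)) :
    prefixProfile fst d (P ++ Q) = prefixProfile fst d (P' ++ Q) := by
  have key : ∀ R : List (Piece k), prefixProfile fst d (R ++ Q)
      = {c | ∃ b ∈ prefixProfile fst d R, relComp (Q.map Piece.rel) b c} := by
    intro R
    ext c
    simp only [prefixProfile, List.map_append, relComp_append, Relation.Comp, Set.mem_ofPred_eq]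
    constructor
    · rintro ⟨a, hd, b, hab, hbc⟩
      exact ⟨b, ⟨a, hd, hab⟩, hbc⟩
    · rintro ⟨b, ⟨a, hd, hab⟩, hbc⟩
      exact ⟨a, hd, b, hab, hbc⟩
  rw [key, key, h]

lemma chainSat_append_congr_left {d e : Fin k} {P P' : List (Piece k)}
    (h : prefixProfile fst d P = prefixProfile fst d P') (Q : List (Piece k)) :
    ChainSat fst lst (P ++ Q) d e ↔ ChainSat fst lst (P' ++ Q) d e := by
  rw [chainSat_append_iff, chainSat_append_iff, h]

lemma chainSat_append_congr_right {d e : Fin k} {Q Q' : List (Piece k)}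
    (h : suffixProfile lst e Q = suffixProfile lst e Q') (P : List (Piece k)) :
    ChainSat fst lst (P ++ Q) d e ↔ ChainSat fst lst (P ++ Q') d e := by
  rw [chainSat_append_iff, chainSat_append_iff, h]

end Chain

/-- The chain through `L` fails at the end values `(d, e)`, but changing any single end value or
middle value can repair it: the form a witness of essentiality of a chain predicate takes. -/
structure ChainWitness {k : ℕ} (fst lst : Set (Tuple k 2)) (d e : Fin k) (L : List (Piece k)) :
    Prop where
  not_sat : ¬ ChainSat fst lst L d e
  sat_left : ∃ d', ChainSat fst lst L d' e
  sat_set : ∀ i (hi : i < L.length), ∃ c, ChainSat fst lst (L.set i (L[i].1, c)) d e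
  sat_right : ∃ e', ChainSat fst lst L d e'

namespace ChainWitness

variable {k : ℕ} {fst lst : Set (Tuple k 2)} {d e : Fin k} {A P B : List (Piece k)}

lemma pump (hpre : prefixProfile fst d (A ++ P) = prefixProfile fst d A)
    (hsuf : suffixProfile lst e (P ++ B) = suffixProfile lst e B)
    (h : ChainWitness fst lst d e (A ++ P ++ B)) :
    ChainWitness fst lst d e (A ++ P ++ P ++ B) := by
  have hR {d'} (X : List (Piece k)) :
      ChainSat fst lst (X ++ (P ++ B)) d' e ↔ ChainSat fst lst (X ++ B) d' e :=
    chainSat_append_congr_right hsuf X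
  have hL {e'} (Y : List (Piece k)) :
      ChainSat fst lst (A ++ P ++ Y) d e' ↔ ChainSat fst lst (A ++ Y) d e' :=
    chainSat_append_congr_left hpre Y
  obtain ⟨hnot, ⟨d', hd'⟩, hset, ⟨e', he'⟩⟩ := h
  rw [List.append_assoc _ P B]
  refine ⟨(hR _).not.2 hnot, ⟨d', (hR _).2 hd'⟩, fun i hi => ?_,
    ⟨e', (hL _).2 (by rwa [← List.append_assoc])⟩⟩
  by_cases hi' : i < (A ++ P).length
  · obtain ⟨c, hc⟩ := hset i (by simp only [List.length_append] at hi' ⊢; omega)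
    refine ⟨c, ?_⟩
    rw [List.set_append_left _ _ hi', List.getElem_append_left hi'] at hc ⊢
    exact (hR _).2 hc
  · obtain ⟨j, rfl⟩ : ∃ j, i = (A ++ P).length + j := ⟨i - (A ++ P).length, by omega⟩
    rw [List.append_assoc] at hset
    obtain ⟨c, hc⟩ := hset (A.length + j) (by simp only [List.length_append] at hi ⊢; omega)
    refine ⟨c, ?_⟩
    rw [List.set_append_right _ _ (by omega), List.getElem_append_right (by omega)] at hc ⊢
    simp only [Nat.add_sub_cancel_left] at hc ⊢
    exact (hL _).2 hc

lemma exists_length_ge (hP : P ≠ []) (hpre : prefixProfile fst d (A ++ P) = prefixProfile fst d A)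
    (hsuf : suffixProfile lst e (P ++ B) = suffixProfile lst e B)
    (h : ChainWitness fst lst d e (A ++ P ++ B)) (n : ℕ) :
    ∃ L, n ≤ L.length ∧ L ⊆ A ++ P ++ B ∧ ChainWitness fst lst d e L := by
  suffices ∃ A', n ≤ A'.length ∧ A' ⊆ A ++ P ∧
      prefixProfile fst d (A' ++ P) = prefixProfile fst d A' ∧
      ChainWitness fst lst d e (A' ++ P ++ B) by
    obtain ⟨A', hn, hA', -, hw⟩ := this
    exact ⟨A' ++ P ++ B, by simp only [List.length_append]; omega, by grind, hw⟩
  induction n with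
  | zero => exact ⟨A, Nat.zero_le _, List.subset_append_left _ _, hpre, h⟩
  | succ n ih =>
    obtain ⟨A', hn, hA', hpre', hw⟩ := ih
    refine ⟨A' ++ P, ?_, List.append_subset.2 ⟨hA', List.subset_append_right _ _⟩,
      prefixProfile_append hpre' P, hw.pump hpre' hsuf⟩
    have := List.length_pos_iff.2 hP
    simp only [List.length_append]
    omega

end ChainWitness

/-- Pigeonhole over the `L.length + 1` ways of cutting `L` in two. -/
lemma List.exists_append_append_map_eq_of_card_lt {α β : Type*} [Fintype β] (L : List α)
    (f : List α → List α → β) (hL : Fintype.card β < L.length + 1) :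
    ∃ A P B, L = A ++ P ++ B ∧ P ≠ [] ∧ f A (P ++ B) = f (A ++ P) B := by
  obtain ⟨i, j, hij, hf⟩ := Fintype.exists_ne_map_eq_of_card_lt
    (fun i : Fin (L.length + 1) => f (L.take i) (L.drop i)) (by simpa using hL)
  wlog hlt : i < j generalizing i j
  · exact this j i hij.symm hf.symm (lt_of_le_of_ne (not_lt.1 hlt) hij.symm)
  have hj := j.is_le
  have hP : (L.drop i).take (j - i) ++ L.drop j = L.drop i := by
    rw [show L.drop j = (L.drop i).drop (j - i) by rw [List.drop_drop, Nat.add_sub_cancel' hlt.le],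
      List.take_append_drop]
  have hA : L.take i ++ (L.drop i).take (j - i) = L.take j := by
    rw [← List.take_add, Nat.add_sub_cancel' hlt.le]
  refine ⟨L.take i, (L.drop i).take (j - i), L.drop j, ?_, ?_, ?_⟩
  · rw [List.append_assoc, hP, List.take_append_drop]
  · simp only [ne_eq, List.take_eq_nil_iff, List.drop_eq_nil_iff, not_or]
    omega
  · rwa [hP, hA]

lemma Fin.forall_fin_add_two {m : ℕ} {P : Fin (m + 2) → Prop} :
    (∀ j, P j) ↔ P 0 ∧ (∀ q : Fin m, P q.succ.castSucc) ∧ P (Fin.last (m + 1)) := by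
  rw [Fin.forall_fin_succ', Fin.forall_fin_succ, Fin.castSucc_zero, and_assoc]

section ChainPred

variable {k m : ℕ} {fst lst : Set (Tuple k 2)} {mid : Fin m → Set (Tuple k 3)}

def chainPieces (mid : Fin m → Set (Tuple k 3)) (x : Tuple k (m + 2)) : List (Piece k) :=
  List.ofFn fun q => (mid q, x q.succ.castSucc)

lemma mem_chainPred_iff {x : Tuple k (m + 2)} :
    x ∈ (chainPred k m fst lst mid).2 ↔
      ChainSat fst lst (chainPieces mid x) (x 0) (x (Fin.last (m + 1))) := by
  simp only [chainPred, ChainSat, chainPieces, List.map_ofFn]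
  constructor
  · rintro ⟨y, hfst, hmid, hlst⟩
    exact ⟨y 0, y (Fin.last m), hfst, (relComp_ofFn_iff _ _ _).2 ⟨y, rfl, rfl, hmid⟩, hlst⟩
  · rintro ⟨a, b, hfst, hmid, hlst⟩
    obtain ⟨y, rfl, rfl, hy⟩ := (relComp_ofFn_iff _ _ _).1 hmid
    exact ⟨y, hfst, hy, hlst⟩

lemma chainPieces_update_of_forall_ne {x : Tuple k (m + 2)} {j : Fin (m + 2)}
    (hj : ∀ q : Fin m, q.succ.castSucc ≠ j) (c : Fin k) :
    chainPieces mid (Function.update x j c) = chainPieces mid x := by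
  simp only [chainPieces, Function.update_of_ne (hj _)]

lemma chainPieces_update_succ_castSucc (x : Tuple k (m + 2)) (q : Fin m) (c : Fin k) :
    chainPieces mid (Function.update x q.succ.castSucc c) =
      (chainPieces mid x).set q (mid q, c) := by
  refine List.ext_getElem (by simp [chainPieces]) fun i hi _ => ?_
  simp only [chainPieces, List.length_ofFn] at hi
  simp only [chainPieces, List.getElem_ofFn, List.getElem_set]
  split_ifs with h
  · subst h
    simp
  · have hne : (⟨i, hi⟩ : Fin m) ≠ q := fun h' => h (congrArg Fin.val h').symm
    rw [Function.update_of_ne fun h' => hne (Fin.succ_injective _ (Fin.castSucc_injective _ h'))]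

lemma forall_exists_update_mem_chainPred_iff {x : Tuple k (m + 2)} :
    (∀ j, ∃ c, Function.update x j c ∈ (chainPred k m fst lst mid).2) ↔
      (∃ d', ChainSat fst lst (chainPieces mid x) d' (x (Fin.last (m + 1)))) ∧
      (∀ i (hi : i < (chainPieces mid x).length),
        ∃ c, ChainSat fst lst ((chainPieces mid x).set i ((chainPieces mid x)[i].1, c))
          (x 0) (x (Fin.last (m + 1)))) ∧
      ∃ e', ChainSat fst lst (chainPieces mid x) (x 0) e' := by
  have h0 : ∀ q : Fin m, q.succ.castSucc ≠ 0 := fun q => Fin.castSucc_ne_zero_iff.2 q.succ_ne_zero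
  have hl : ∀ q : Fin m, q.succ.castSucc ≠ Fin.last (m + 1) := fun q => Fin.castSucc_ne_last _
  simp only [Fin.forall_fin_add_two, mem_chainPred_iff, chainPieces_update_of_forall_ne h0,
    chainPieces_update_of_forall_ne hl, chainPieces_update_succ_castSucc, Function.update_self,
    Function.update_of_ne (Fin.last_pos.ne'), Function.update_of_ne (Fin.last_pos.ne),
    Function.update_of_ne (h0 _).symm, Function.update_of_ne (hl _).symm]
  refine and_congr_right' (and_congr_left' ?_)
  simp [chainPieces, Fin.forall_iff]

lemma essential_chainPred_iff :
    Essential k (chainPred k m fst lst mid) ↔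
      ∃ x : Tuple k (m + 2),
        ChainWitness fst lst (x 0) (x (Fin.last (m + 1))) (chainPieces mid x) := by
  refine (essential_iff_exists_update (R := (chainPred k m fst lst mid).2)).trans
    (exists_congr fun x => ?_)
  constructor
  · rintro ⟨hx, hj⟩
    obtain ⟨h0, hmid, hlast⟩ := forall_exists_update_mem_chainPred_iff.1 hj
    exact ⟨mem_chainPred_iff.not.1 hx, h0, hmid, hlast⟩
  · rintro ⟨hx, h0, hmid, hlast⟩
    exact ⟨mem_chainPred_iff.not.2 hx, forall_exists_update_mem_chainPred_iff.2 ⟨h0, hmid, hlast⟩⟩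

lemma ChainWitness.essential_chainPred {d e : Fin k} {L : List (Piece k)}
    (h : ChainWitness fst lst d e L) :
    Essential k (chainPred k L.length fst lst fun q => L[q].1) := by
  let x : Tuple k (L.length + 2) := Fin.cons d (Fin.snoc (fun q : Fin L.length => L[q].2) e)
  have hx : chainPieces (fun q : Fin L.length => L[q].1) x = L := by
    simp [x, chainPieces]
  refine essential_chainPred_iff.2 ⟨x, ?_⟩
  rwa [hx, show x 0 = d from rfl, show x (Fin.last _) = e by simp [x, ← Fin.succ_last]]

lemma fst_mem_of_mem_chainPieces {x : Tuple k (m + 2)} {p : Piece k}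
    (hp : p ∈ chainPieces mid x) : ∃ q, p.1 = mid q := by
  obtain ⟨q, rfl⟩ := List.mem_ofFn.1 hp
  exact ⟨q, rfl⟩

end ChainPred

theorem infinite_essential_of_long_chain_general (k : ℕ) (G : Set (Pred k))
    (m : ℕ) (fst lst : Set (Tuple k 2)) (mid : Fin m → Set (Tuple k 3))
    (hlong : 2 ^ (2 * k ^ 2) + 2 < m + 2)
    (hess : Essential k (chainPred k m fst lst mid))
    (h1 : (⟨2, fst⟩ : Pred k) ∈ ppClosure k G)
    (h2 : (⟨2, lst⟩ : Pred k) ∈ ppClosure k G)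
    (h3 : ∀ i, (⟨3, mid i⟩ : Pred k) ∈ ppClosure k G) :
    { ρ ∈ ppClosure k G | Essential k ρ }.Infinite := by
  obtain ⟨x, hx⟩ := essential_chainPred_iff.1 hess
  have hcard : Fintype.card (Set (Fin k) × Set (Fin k)) < (chainPieces mid x).length + 1 := by
    have : 2 ^ (2 * k) ≤ 2 ^ (2 * k ^ 2) :=
      Nat.pow_le_pow_right two_pos (Nat.mul_le_mul_left 2 (Nat.le_self_pow two_ne_zero k))
    simp only [Fintype.card_prod, Fintype.card_set, Fintype.card_fin, chainPieces,
      List.length_ofFn, ← pow_add, ← two_mul]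
    omega
  obtain ⟨A, P, B, hL, hP, hprof⟩ := (chainPieces mid x).exists_append_append_map_eq_of_card_lt
    (fun X Y => (prefixProfile fst (x 0) X, suffixProfile lst (x (Fin.last _)) Y)) hcard
  obtain ⟨hpre, hsuf⟩ := Prod.ext_iff.1 hprof
  rw [hL] at hx
  refine Set.Infinite.of_image Sigma.fst (Set.infinite_of_forall_exists_gt fun n => ?_)
  obtain ⟨L, hn, hLsub, hLw⟩ := hx.exists_length_ge hP hpre.symm hsuf n
  refine ⟨L.length + 2, ⟨_, ⟨?_, hLw.essential_chainPred⟩, rfl⟩, by omega⟩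
  refine ppClosure_subset_ppClosure_of_subset subset_rfl
    (chainPred_mem_ppClosure h1 h2 fun q => ?_)
  obtain ⟨i, hi⟩ := fst_mem_of_mem_chainPieces (hL ▸ hLsub (List.getElem_mem q.isLt))
  exact hi ▸ h3 i

theorem infinite_essential_of_long_chain (k : ℕ) (hk : 2 ≤ k) (G : Set (Pred k))
    (m : ℕ) (fst lst : Set (Tuple k 2)) (mid : Fin m → Set (Tuple k 3))
    (hlong : 2 ^ (2 * k ^ 2) + 2 < m + 2)
    (hess : Essential k (chainPred k m fst lst mid))
    (h1 : (⟨2, fst⟩ : Pred k) ∈ ppClosure k G)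
    (h2 : (⟨2, lst⟩ : Pred k) ∈ ppClosure k G)
    (h3 : ∀ i, (⟨3, mid i⟩ : Pred k) ∈ ppClosure k G) :
    { ρ ∈ ppClosure k G | Essential k ρ }.Infinite :=
  infinite_essential_of_long_chain_general k G m fst lst mid hlong hess h1 h2 h3
end

section
/- Let k ≥ 2 and ρ ∈ R_k^n with n ≥ 1. The following three conditions are equivalent: (1) ρ is an essential predicate; (2) ρ ≠ ρ̃; (3) there exists an essential tuple for ρ. -/
def tilde {k n : ℕ} (R : Set (Tuple k n)) : Set (Tuple k n) :=
  { x | ∀ i : Fin n, ∃ b : Fin k, Function.update x i b ∈ R }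

def EssTuple {k n : ℕ} (R : Set (Tuple k n)) (a : Tuple k n) : Prop :=
  a ∉ R ∧ ∀ i : Fin n, ∃ b : Fin k, Function.update a i b ∈ R

/-!
Always `ρ ⊆ ρ̃`, and the essential tuples of `ρ` are exactly the elements of `ρ̃ \ ρ`.
By construction `ρ̃` is the conjunction of the `n` projections `σ_i`, of arity `n - 1`.
Conversely, a conjunct of arity `< n` misses some coordinate `j`, so it cannot tell `x` from
`x` with its `j`-th entry changed; hence a conjunction of predicates of smaller arity
contains its `ρ̃`.
So `ρ` is essential iff `ρ ≠ ρ̃`.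
-/

section Tilde

variable {k n : ℕ} (R : Set (Tuple k n))

theorem subset_tilde : R ⊆ tilde R :=
  fun x hx i => ⟨x i, by rwa [Function.update_eq_self]⟩

theorem exists_essTuple_iff_ne_tilde : (∃ a, EssTuple R a) ↔ R ≠ tilde R := by
  rw [Ne, Set.Subset.antisymm_iff, and_iff_right (subset_tilde R), Set.not_subset]
  exact ⟨fun ⟨a, haR, ha⟩ => ⟨a, ha, haR⟩, fun ⟨a, ha, haR⟩ => ⟨a, haR, ha⟩⟩

theorem tilde_subset_of_mem_andClosure
    (hR : ⟨n, R⟩ ∈ andClosure k {σ : Pred k | σ.1 < n}) : tilde R ⊆ R := by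
  obtain ⟨s, σ, z, hσ, -, hR⟩ := hR
  intro x hx
  refine (hR x).2 fun i => ?_
  obtain ⟨j, hj⟩ : ∃ j, j ∉ Set.range (z i) := by
    by_contra! hsurj
    exact (hσ i).not_ge (Fin.le_of_surjective _ hsurj)
  obtain ⟨b, hb⟩ := hx j
  have hagree : (fun l => Function.update x j b (z i l)) = fun l => x (z i l) :=
    funext fun l => Function.update_of_ne (fun h => hj ⟨l, h⟩) _ _
  exact hagree ▸ (hR _).1 hb i

theorem mem_andClosure_of_tilde_subset (hR : tilde R ⊆ R) :
    ⟨n, R⟩ ∈ andClosure k {σ : Pred k | σ.1 < n} := by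
  cases n with
  | zero =>
    exact ⟨0, Fin.elim0, fun i => i.elim0, fun i => i.elim0, fun i => i.elim0,
      fun x => iff_of_true (hR fun i => i.elim0) fun i => i.elim0⟩
  | succ m =>
    refine ⟨m + 1, fun i : Fin (m + 1) => ⟨m, {t | ∃ b, i.insertNth b t ∈ R}⟩,
      fun i => i.succAbove, fun _ => Nat.lt_succ_self m,
      fun _ => Fin.succAbove_right_injective, fun x => ?_⟩
    change x ∈ R ↔ ∀ i : Fin (m + 1), ∃ b, i.insertNth b (i.removeNth x) ∈ R
    simp only [Fin.insertNth_removeNth]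
    exact ⟨fun hx => subset_tilde R hx, fun hx => hR hx⟩

theorem essential_iff_ne_tilde : Essential k ⟨n, R⟩ ↔ R ≠ tilde R := by
  refine not_congr ⟨fun hR => ?_, fun hR => mem_andClosure_of_tilde_subset R hR.ge⟩
  exact (subset_tilde R).antisymm (tilde_subset_of_mem_andClosure R hR)

end Tilde

theorem essential_tfae_general (k n : ℕ)
    (R : Set (Tuple k n)) :
    (Essential k ⟨n, R⟩ ↔ R ≠ tilde R) ∧
      (Essential k ⟨n, R⟩ ↔ ∃ a, EssTuple R a) :=
  ⟨essential_iff_ne_tilde R,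
    (essential_iff_ne_tilde R).trans (exists_essTuple_iff_ne_tilde R).symm⟩

theorem essential_tfae (k n : ℕ) (hk : 2 ≤ k) (hn : 1 ≤ n)
    (R : Set (Tuple k n)) :
    (Essential k ⟨n, R⟩ ↔ R ≠ tilde R) ∧
      (Essential k ⟨n, R⟩ ↔ ∃ a, EssTuple R a) :=
  essential_tfae_general k n R
end

section
/- Let k ≥ 2. For every predicate ρ ∈ R_k one has ρ ∈ AND(Strike(ρ) ∩ R̃_k); that is, every predicate is a conjunction (with no repeated variables inside a single conjunct) of essential predicates each obtainable from ρ by existentially quantifying some coordinates and injectively renaming the remaining coordinates. -/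
/-!
Induction on the arity of `ρ`. An essential `ρ` is its own decomposition. Otherwise `ρ` is a
conjunction of predicates of smaller arity, and replacing each conjunct by the projection of `ρ`
onto the variables of that conjunct keeps the conjunction equal to `ρ` while putting every
conjunct into `Strike(ρ)`. The induction hypothesis decomposes these projections, and both
`Strike` and `AND` are transitive.
-/

open Function

section

variable {k : ℕ}

def proj (ρ : Pred k) {m : ℕ} (w : Fin m → Fin ρ.1) : Pred k :=
  ⟨m, {x | ∃ u ∈ ρ.2, u ∘ w = x}⟩

theorem Fin.append_eq_sumElim_symm {α : Type*} {m n : ℕ} (x : Fin m → α) (y : Fin n → α)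
    (i : Fin (m + n)) : Fin.append x y i = Sum.elim x y (finSumFinEquiv.symm i) := by
  induction i using Fin.addCases <;> simp

theorem mem_strike_iff {ρ ρ' : Pred k} :
    ρ' ∈ strike k ρ ↔ ∃ (Y : Type) (_ : Finite Y) (z : Fin ρ.1 → Fin ρ'.1 ⊕ Y),
      Injective z ∧ ∀ x, x ∈ ρ'.2 ↔ ∃ y : Y → Fin k, Sum.elim x y ∘ z ∈ ρ.2 := by
  constructor
  · rintro ⟨l, z, hz, hρ'⟩
    refine ⟨Fin l, inferInstance, finSumFinEquiv.symm ∘ z, finSumFinEquiv.symm.injective.comp hz,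
      fun x => ?_⟩
    simp only [Fin.append_eq_sumElim_symm] at hρ'
    exact hρ' x
  · rintro ⟨Y, _, z, hz, hρ'⟩
    let e := Finite.equivFin Y
    refine ⟨Nat.card Y, finSumFinEquiv ∘ Sum.map id e ∘ z,
      finSumFinEquiv.injective.comp ((Sum.map_injective.2 ⟨injective_id, e.injective⟩).comp hz),
      fun x => (hρ' x).trans ?_⟩
    have key : ∀ y : Fin (Nat.card Y) → Fin k,
        (fun j => Fin.append x y ((finSumFinEquiv ∘ Sum.map id e ∘ z) j)) =
          Sum.elim x (y ∘ e) ∘ z := by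
      intro y
      funext j
      simp [Fin.append_eq_sumElim_symm, Sum.elim_map]
    simp only [key]
    exact ⟨fun ⟨y, hy⟩ => ⟨y ∘ e.symm, by simpa [comp_assoc] using hy⟩, fun ⟨y, hy⟩ => ⟨_, hy⟩⟩

theorem strike_self (ρ : Pred k) : ρ ∈ strike k ρ :=
  mem_strike_iff.2 ⟨Empty, inferInstance, Sum.inl, Sum.inl_injective, fun _ =>
    ⟨fun hx => ⟨Empty.elim, hx⟩, fun ⟨_, hy⟩ => hy⟩⟩

theorem strike_trans {ρ ρ' τ : Pred k} (h : ρ' ∈ strike k ρ) (h' : τ ∈ strike k ρ') :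
    τ ∈ strike k ρ := by
  obtain ⟨Y, _, z, hz, hρ'⟩ := mem_strike_iff.1 h
  obtain ⟨Y', _, z', hz', hτ⟩ := mem_strike_iff.1 h'
  let c : Fin ρ'.1 ⊕ Y → Fin τ.1 ⊕ (Y' ⊕ Y) :=
    Sum.elim (Sum.map id Sum.inl ∘ z') (Sum.inr ∘ Sum.inr)
  have hc : Injective c := by
    refine Sum.elim_injective.2 ⟨(Sum.map_injective.2 ⟨injective_id, Sum.inl_injective⟩).comp hz',
      Sum.inr_injective.comp Sum.inr_injective, fun a b => ?_⟩
    cases h : z' a <;> simp [h]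
  have key : ∀ (x : Tuple k τ.1) (w : Y' ⊕ Y → Fin k),
      Sum.elim x w ∘ c = Sum.elim (Sum.elim x (w ∘ Sum.inl) ∘ z') (w ∘ Sum.inr) := by
    intro x w
    simp only [c, Sum.comp_elim, ← comp_assoc, Sum.elim_comp_map, comp_id]
    rfl
  refine mem_strike_iff.2 ⟨Y' ⊕ Y, inferInstance, c ∘ z, hc.comp hz, fun x => ?_⟩
  simp only [hτ, hρ', ← comp_assoc, key]
  exact ⟨fun ⟨y', y, hy⟩ => ⟨Sum.elim y' y, by simpa using hy⟩, fun ⟨w, hw⟩ => ⟨_, _, hw⟩⟩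

theorem proj_mem_strike (ρ : Pred k) {m : ℕ} {w : Fin m → Fin ρ.1} (hw : Injective w) :
    proj ρ w ∈ strike k ρ := by
  classical
  let e : Fin ρ.1 ≃ Fin m ⊕ ↥(Set.range w)ᶜ := (Equiv.Set.sumCompl (Set.range w)).symm.trans
    (Equiv.sumCongr (Equiv.ofInjective w hw).symm (Equiv.refl _))
  have he : ∀ j, e.symm (Sum.inl j) = w j := fun j => rfl
  refine mem_strike_iff.2 ⟨_, inferInstance, e, e.injective, fun x => ⟨?_, ?_⟩⟩
  · rintro ⟨u, hu, hux⟩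
    refine ⟨u ∘ e.symm ∘ Sum.inr, ?_⟩
    have : Sum.elim x (u ∘ e.symm ∘ Sum.inr) = u ∘ e.symm := by
      funext t
      rcases t with j | j
      · exact (congrFun hux j).symm.trans (congrArg u (he j).symm)
      · rfl
    rw [this]
    convert hu using 1
    exact funext fun t => congrArg u (e.symm_apply_apply t)
  · rintro ⟨y, hy⟩
    refine ⟨_, hy, funext fun j => ?_⟩
    rw [comp_apply, ← he j]
    exact congrArg (Sum.elim x y) (e.apply_symm_apply _)

theorem subset_andClosure {S : Set (Pred k)} {ρ : Pred k} (h : ρ ∈ S) : ρ ∈ andClosure k S :=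
  ⟨1, fun _ => ρ, fun _ => id, fun _ => h, fun _ => injective_id,
    fun _ => ⟨fun hx _ => hx, fun h => h 0⟩⟩

theorem andClosure_mono {S T : Set (Pred k)} (hST : S ⊆ T) : andClosure k S ⊆ andClosure k T :=
  fun _ ⟨s, σ, z, hσ, hz, hρ⟩ => ⟨s, σ, z, fun i => hST (hσ i), hz, hρ⟩

theorem mem_andClosure_of_finite {S : Set (Pred k)} {ρ : Pred k} {ι : Type} [Finite ι]
    (σ : ι → Pred k) (z : ∀ i, Fin (σ i).1 → Fin ρ.1) (hσ : ∀ i, σ i ∈ S)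
    (hz : ∀ i, Injective (z i)) (hρ : ∀ x, x ∈ ρ.2 ↔ ∀ i, x ∘ z i ∈ (σ i).2) :
    ρ ∈ andClosure k S :=
  let e := Finite.equivFin ι
  ⟨_, σ ∘ e.symm, fun a => z (e.symm a), fun _ => hσ _, fun _ => hz _,
    fun x => (hρ x).trans e.symm.forall_congr_right.symm⟩

theorem andClosure_trans {S T : Set (Pred k)} {ρ : Pred k} (h : ρ ∈ andClosure k S)
    (hS : ∀ σ ∈ S, σ ∈ andClosure k T) : ρ ∈ andClosure k T := by
  obtain ⟨s, σ, z, hσ, hz, hρ⟩ := h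
  choose s' τ w hτ hw hστ using fun i => hS _ (hσ i)
  refine mem_andClosure_of_finite (ι := Σ i, Fin (s' i)) (fun p => τ p.1 p.2)
    (fun p => z p.1 ∘ w p.1 p.2) (fun p => hτ _ _) (fun p => (hz _).comp (hw _ _)) fun x => ?_
  rw [hρ, Sigma.forall]
  exact forall_congr' fun i => hστ i _

theorem mem_andClosure_strike_of_mem_andClosure_arity_lt {ρ : Pred k} {n : ℕ}
    (h : ρ ∈ andClosure k {σ | σ.1 < n}) : ρ ∈ andClosure k (strike k ρ ∩ {σ | σ.1 < n}) := by
  obtain ⟨s, σ, z, hσ, hz, hρ⟩ := h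
  refine ⟨s, fun i => proj ρ (z i), z, fun i => ⟨proj_mem_strike ρ (hz i), hσ i⟩, hz,
    fun x => ⟨fun hx i => ⟨x, hx, rfl⟩, fun hx => (hρ x).2 fun i => ?_⟩⟩
  obtain ⟨u, hu, hux⟩ := hx i
  exact hux ▸ (hρ u).1 hu i

end

theorem mem_andClosure_strike_essential_general (k : ℕ) (ρ : Pred k) :
    ρ ∈ andClosure k (strike k ρ ∩ { σ | Essential k σ }) := by
  induction hn : ρ.1 using Nat.strong_induction_on generalizing ρ with
  | _ n ih =>
  by_cases hE : Essential k ρ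
  · exact subset_andClosure ⟨strike_self ρ, hE⟩
  have hproj := mem_andClosure_strike_of_mem_andClosure_arity_lt (not_not.1 hE)
  refine andClosure_trans hproj fun σ ⟨hσρ, hσn⟩ => andClosure_mono ?_ (ih _ (hn ▸ hσn) σ rfl)
  exact fun τ ⟨hτσ, hτ⟩ => ⟨strike_trans hσρ hτσ, hτ⟩

theorem mem_andClosure_strike_essential (k : ℕ) (hk : 2 ≤ k) (ρ : Pred k) :
    ρ ∈ andClosure k (strike k ρ ∩ { σ | Essential k σ }) :=
  mem_andClosure_strike_essential_general k ρ
end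

section
/- Let k ≥ 2, let ρ ∈ R_k, and let α_i, β_i ∈ E_k^{s_i} for i ∈ {1,…,n} (with the arity of ρ equal to s_1+…+s_n) satisfy ρ(α_1α_2…α_n) = 0 and, for every j ∈ {1,…,n}, ρ(α_1…α_{j−1}β_jα_{j+1}…α_n) = 1 (concatenation of blocks). Then there exists an essential predicate ρ' ∈ [{ρ}] with ar(ρ') ≥ n. -/
def blockSwitch {k m n : ℕ} (b : Fin m → Fin n) (a c : Tuple k m) (j : Fin n) : Tuple k m :=
  fun s => if b s = j then c s else a s

def IsBlockWitness {k m : ℕ} (S : Set (Tuple k m)) (n : ℕ) : Prop :=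
  ∃ (b : Fin m → Fin n) (a c : Tuple k m), a ∉ S ∧ ∀ j, blockSwitch b a c j ∈ S

theorem IsBlockWitness.le_arity {k m n : ℕ} {S : Set (Tuple k m)} (h : IsBlockWitness S n) :
    n ≤ m := by
  obtain ⟨b, a, c, ha, hc⟩ := h
  have hb : Function.Surjective b := by
    intro j
    by_contra! hj
    have : blockSwitch b a c j = a := funext fun s => if_neg (hj s)
    exact ha (this ▸ hc j)
  simpa using Fintype.card_le_of_surjective b hb

theorem IsBlockWitness.image_comp {k m m' n : ℕ} {S : Set (Tuple k m)} {T : Set (Tuple k m')}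
    {z : Fin m' → Fin m} (hST : ∀ x ∈ S, x ∘ z ∈ T) {b : Fin m → Fin n} {a c : Tuple k m}
    (ha : a ∘ z ∉ T) (hc : ∀ j, blockSwitch b a c j ∈ S) :
    IsBlockWitness ((· ∘ z) '' S) n := by
  refine ⟨b ∘ z, a ∘ z, c ∘ z, ?_, fun j => ⟨_, hc j, rfl⟩⟩
  rintro ⟨x, hx, hxa⟩
  exact ha (hxa ▸ hST x hx)

theorem IsBlockWitness.essential_of_minimal {k m n : ℕ} {S : Set (Tuple k m)}
    (hS : IsBlockWitness S n)
    (hmin : ∀ m' < m, ∀ w : Fin m' ↪ Fin m, ¬ IsBlockWitness ((· ∘ w) '' S) n) :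
    Essential k ⟨m, S⟩ := by
  obtain ⟨b, a, c, ha, hc⟩ := hS
  rintro ⟨s, σ, z, hlt, hinj, hiff⟩
  obtain ⟨i, hi⟩ : ∃ i, (fun j => a (z i j)) ∉ (σ i).2 := by
    by_contra! h
    exact ha ((hiff a).mpr h)
  exact hmin _ (hlt i) ⟨z i, hinj i⟩ <|
    IsBlockWitness.image_comp (fun x hx => (hiff x).mp hx i) hi hc

/-- Coordinate `t` of `R` is filled by the free variable `x_j` when `t = z j`, and is
quantified otherwise. -/
theorem image_comp_mem_ppClosure {k M m : ℕ} (R : Set (Tuple k M)) {z : Fin m → Fin M}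
    (hz : Function.Injective z) :
    (⟨m, (· ∘ z) '' R⟩ : Pred k) ∈ ppClosure k {(⟨M, R⟩ : Pred k)} := by
  classical
  set v : Fin M → Fin (m + M) := fun t =>
    (Function.partialInv z t).elim (Fin.natAdd m t) (Fin.castAdd M)
  have hvz : ∀ j, v (z j) = Fin.castAdd M j := fun j => by
    simp [v, Function.partialInv_left hz]
  refine ⟨M, 1, fun _ => ⟨M, R⟩, fun _ => v, fun _ => Or.inl rfl, fun x => ⟨?_, ?_⟩⟩
  · rintro ⟨u, hu, rfl⟩
    refine ⟨u, fun _ => Set.mem_of_eq_of_mem (funext fun t => ?_) hu⟩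
    cases h : Function.partialInv z t with
    | none => simp [v, h]
    | some j =>
      obtain rfl : z j = t := hz.isPartialInv j t |>.mp h
      simp [hvz]
  · rintro ⟨y, hy⟩
    exact ⟨_, hy 0, funext fun j => by simp [hvz]⟩

theorem exists_essential_of_blocks_general (k M n : ℕ)
    (R : Set (Tuple k M)) (blk : Fin M → Fin n)
    (α β : Tuple k M)
    (h0 : α ∉ R)
    (h1 : ∀ j : Fin n, (fun i => if blk i = j then β i else α i) ∈ R) :
    ∃ ρ' ∈ ppClosure k {(⟨M, R⟩ : Pred k)}, Essential k ρ' ∧ n ≤ ρ'.1 := by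
  classical
  have hex : ∃ m, ∃ z : Fin m ↪ Fin M, IsBlockWitness ((· ∘ z) '' R) n :=
    ⟨M, Function.Embedding.refl _, by
      simpa only [Function.Embedding.coe_refl, Function.comp_id, Set.image_id']
        using ⟨blk, α, β, h0, h1⟩⟩
  obtain ⟨z, hz⟩ := Nat.find_spec hex
  refine ⟨_, image_comp_mem_ppClosure R z.injective,
    hz.essential_of_minimal fun m' hm' w hw => ?_, hz.le_arity⟩
  exact Nat.find_min hex hm' ⟨w.trans z, by rwa [Set.image_image] at hw⟩

theorem exists_essential_of_blocks (k M n : ℕ) (hk : 2 ≤ k)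
    (R : Set (Tuple k M)) (blk : Fin M → Fin n) (hblk : Monotone blk)
    (α β : Tuple k M)
    (h0 : α ∉ R)
    (h1 : ∀ j : Fin n, (fun i => if blk i = j then β i else α i) ∈ R) :
    ∃ ρ' ∈ ppClosure k {(⟨M, R⟩ : Pred k)}, Essential k ρ' ∧ n ≤ ρ'.1 :=
  exists_essential_of_blocks_general k M n R blk α β h0 h1
end

section
/- Let k ≥ 2 and G ⊆ R_k with [G] ∩ R̃_k finite. Let ρ ∈ MAX(G) be n-ary and ρ' ∈ [G] with ρ(x_1,…,x_n) = ρ'(x_1,…,x_1, x_2,…,x_2, …, x_n,…,x_n) where x_j is repeated m_j times. Then there exist indices i_1,…,i_n such that ρ(x_1,…,x_n) = ∃t_1∃t_2…∃t_l ρ'(z_{1,1},…,z_{1,m_1},…,z_{n,1},…,z_{n,m_n}), where z_{j,i_j} = x_j for every j, all the variables z_{i,j} are pairwise distinct, and the remaining z_{i,j} are the bound variables t_1,…,t_l. In particular, ρ ∈ Strike(ρ'). -/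
def predLE (k : ℕ) (ρ σ : Pred k) : Prop :=
  ∃ h : ρ.1 = σ.1, ∀ x : Tuple k σ.1, (fun i => x (Fin.cast h i)) ∈ ρ.2 → x ∈ σ.2

def MAXset (k : ℕ) (G : Set (Pred k)) : Set (Pred k) :=
  { ρ | ρ ∈ ppClosure k G ∧ Essential k ρ ∧
      (∀ σ ∈ ppClosure k G, Essential k σ → σ.1 ≤ ρ.1) ∧
      (∀ σ ∈ ppClosure k G, Essential k σ → predLE k ρ σ → ρ = σ) }

/-!
Write `ρ` as `ρ'` with the coordinates in a set `S` identified along `blk` and all others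
existentially quantified, and take `S` minimal. Being essential, `ρ` has a hole: a tuple
`xs ∉ ρ` all of whose one-coordinate modifications can be brought into `ρ`; inessential
predicates have no holes. If `blk` identified two coordinates `p ≠ q` of `S` in a block `j`,
minimality and the maximality of `ρ` make each `S \ {c}` define an inessential predicate
`⊇ ρ`, which therefore contains `xs`. Giving every coordinate of the block `j` other than `q`
its own free variable yields an inessential predicate of arity `> n` in `[G]`, and the
witnesses for the sets `S \ {c}` repair each coordinate of `(xs, xs j, …, xs j)`, so this tuple
lies in it, i.e. `xs ∈ ρ`. Thus `blk` is injective on `S`; it is onto because `ρ` depends on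
each of its coordinates.
-/

theorem Fin.castAdd_ne_natAdd {m n : ℕ} (a : Fin m) (b : Fin n) :
    Fin.castAdd n a ≠ Fin.natAdd m b := by
  simp only [ne_eq, Fin.ext_iff, Fin.val_castAdd, Fin.val_natAdd]
  omega

theorem update_comp_append_const {α : Type*} {n m : ℕ} (x : Fin n → α) {a j : Fin n}
    (ha : a ≠ j) (s : α) :
    Function.update (x ∘ Fin.append id fun _ : Fin m => j) (Fin.castAdd m a) s =
      Function.update x a s ∘ Fin.append id fun _ => j := by
  funext r
  refine Fin.addCases (fun b => ?_) (fun u => ?_) r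
  · by_cases hb : b = a
    · simp [hb]
    · simp [hb, Function.update_of_ne]
  · simp [Function.update_of_ne (Ne.symm ha),
      Function.update_of_ne (Fin.castAdd_ne_natAdd a u).symm]

variable {k : ℕ}

theorem essential_iff_exists_hole {ρ : Pred k} :
    Essential k ρ ↔ ∃ v, v ∉ ρ.2 ∧ ∀ i, ∃ s, Function.update v i s ∈ ρ.2 := by
  obtain ⟨m, T⟩ := ρ
  constructor
  · intro hess
    by_contra hno
    have hclosed : ∀ v, (∀ i, ∃ s, Function.update v i s ∈ T) → v ∈ T :=
      fun v hv => by_contra fun hvT => hno ⟨v, hvT, hv⟩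
    apply hess
    cases m with
    | zero =>
      exact ⟨0, Fin.elim0, fun t => t.elim0, fun t => t.elim0, fun t => t.elim0,
        fun x => ⟨fun _ t => t.elim0, fun _ => hclosed x (fun i => i.elim0)⟩⟩
    | succ m =>
      refine ⟨m + 1, fun i => ⟨m, {u | ∃ s, Fin.insertNth i s u ∈ T}⟩, fun i => i.succAbove,
        fun _ => Nat.lt_succ_self m, fun _ => Fin.succAbove_right_injective, fun x => ?_⟩
      refine ⟨fun hx i => ⟨x i, ?_⟩, fun hx => hclosed x fun i => ?_⟩
      · change Fin.insertNth i (x i) (Fin.removeNth i x) ∈ T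
        rwa [Fin.insertNth_removeNth, Function.update_eq_self]
      · obtain ⟨s, hs⟩ := hx i
        exact ⟨s, by rwa [← Fin.insertNth_removeNth]⟩
  · rintro ⟨v, hv, hupd⟩ ⟨s, σ, z, hσ, -, hiff⟩
    refine hv ((hiff v).2 fun t => ?_)
    -- a conjunct of arity `< m` misses some coordinate `i`, where `v` may be updated freely
    obtain ⟨i, hi⟩ : ∃ i, i ∉ Set.range (z t) := by
      by_contra! hsurj
      have := Fintype.card_le_of_surjective (z t) (fun i => hsurj i)
      simp only [Fintype.card_fin] at this
      exact absurd (hσ t) (not_lt.2 this)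
    obtain ⟨s, hs⟩ := hupd i
    convert (hiff _).1 hs t using 1
    funext jj
    rw [Function.update_of_ne fun h => hi ⟨jj, h⟩]

theorem mk_mem_ppClosure_of_rename {G : Set (Pred k)} {M N L : ℕ} {R' : Set (Tuple k M)}
    (hR' : (⟨M, R'⟩ : Pred k) ∈ ppClosure k G) (g : Fin M → Fin (N + L)) :
    (⟨N, {x | ∃ y : Tuple k L, (fun i => Fin.append x y (g i)) ∈ R'}⟩ : Pred k) ∈
      ppClosure k G := by
  obtain ⟨l, s, σ, z, hσ, hiff⟩ := hR'
  -- the bound variables of the new formula are those of `y` followed by those of `R'`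
  let rename : Fin (M + l) → Fin (N + (L + l)) :=
    Fin.cast (Nat.add_assoc N L l) ∘ Fin.append (fun i => Fin.castAdd l (g i)) (Fin.natAdd (N + L))
  have happend (x : Tuple k N) (y : Tuple k L) (u : Tuple k l) :
      Fin.append x (Fin.append y u) ∘ rename = Fin.append (fun i => Fin.append x y (g i)) u := by
    rw [← Function.comp_assoc, ← Fin.append_assoc]
    funext r
    refine Fin.addCases (fun i => ?_) (fun i => ?_) r <;> simp
  refine ⟨L + l, s, σ, fun t j => rename (z t j), hσ, fun x => ?_⟩
  simp only [Set.mem_ofPred_eq, hiff]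
  constructor
  · rintro ⟨y, u, h⟩
    exact ⟨Fin.append y u, fun t => by simpa [← happend] using h t⟩
  · rintro ⟨Y, h⟩
    refine ⟨fun i => Y (Fin.castAdd l i), fun i => Y (Fin.natAdd L i), fun t => ?_⟩
    simpa [← happend, Fin.append_castAdd_natAdd] using h t

def minorOn {M N : ℕ} (R' : Set (Tuple k M)) (S : Finset (Fin M)) (τ : Fin M → Fin N) :
    Set (Tuple k N) :=
  {v | ∃ w ∈ R', ∀ i ∈ S, w i = v (τ i)}

section minorOn

variable {M N n : ℕ} {R' : Set (Tuple k M)} {S : Finset (Fin M)}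

theorem minorOn_mem_ppClosure {G : Set (Pred k)} (hR' : (⟨M, R'⟩ : Pred k) ∈ ppClosure k G)
    (S : Finset (Fin M)) (τ : Fin M → Fin N) :
    (⟨N, minorOn R' S τ⟩ : Pred k) ∈ ppClosure k G := by
  classical
  convert mk_mem_ppClosure_of_rename hR'
    (fun i => if i ∈ S then Fin.castAdd M (τ i) else Fin.natAdd N i) using 3
  ext v
  constructor
  · rintro ⟨w, hw, hwv⟩
    refine ⟨w, ?_⟩
    convert hw using 1
    funext i
    split_ifs with hi <;> simp [hwv i, hi]
  · rintro ⟨y, hy⟩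
    exact ⟨_, hy, fun i hi => by simp [hi]⟩

theorem minorOn_anti {T : Finset (Fin M)} (hST : S ⊆ T) (τ : Fin M → Fin N) :
    minorOn R' T τ ⊆ minorOn R' S τ :=
  fun _ ⟨w, hw, hwv⟩ => ⟨w, hw, fun i hi => hwv i (hST hi)⟩

theorem comp_mem_minorOn_iff {τ : Fin M → Fin N} {σ : Fin N → Fin n} {π : Fin M → Fin n}
    (hστ : ∀ i, σ (τ i) = π i) (x : Tuple k n) :
    x ∘ σ ∈ minorOn R' S τ ↔ x ∈ minorOn R' S π := by
  simp only [minorOn, Set.mem_ofPred_eq, Function.comp_apply, hστ]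

theorem exists_update_comp_mem_minorOn {τ : Fin M → Fin N} {σ : Fin N → Fin n}
    {π : Fin M → Fin n} (hστ : ∀ i, σ (τ i) = π i) {c : Fin M} (hc : c ∈ S)
    (hτc : ∀ i ∈ S, τ i = τ c → i = c) {x : Tuple k n} (hx : x ∈ minorOn R' (S.erase c) π) :
    ∃ s, Function.update (x ∘ σ) (τ c) s ∈ minorOn R' S τ := by
  obtain ⟨w, hw, hwx⟩ := hx
  refine ⟨w c, w, hw, fun i hi => ?_⟩
  by_cases hic : i = c
  · subst hic
    simp
  · rw [Function.update_of_ne fun h => hic (hτc i hi h), Function.comp_apply, hστ]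
    exact hwx i (Finset.mem_erase.2 ⟨hic, hi⟩)

theorem exists_mem_of_update_mem_minorOn {π : Fin M → Fin n} {x : Tuple k n} {j : Fin n}
    {s : Fin k} (hx : x ∉ minorOn R' S π) (hs : Function.update x j s ∈ minorOn R' S π) :
    ∃ i ∈ S, π i = j := by
  by_contra! hj
  obtain ⟨w, hw, hwx⟩ := hs
  exact hx ⟨w, hw, fun i hi => by rw [hwx i hi, Function.update_of_ne (hj i hi)]⟩

theorem mem_minorOn_iff_of_leftInverse {π : Fin M → Fin n} {ι : Fin n → Fin M}
    (hιS : ∀ j, ι j ∈ S) (hι : Function.LeftInverse π ι) (hπ : Set.InjOn π S) (x : Tuple k n) :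
    x ∈ minorOn R' S π ↔ ∃ w ∈ R', ∀ j, w (ι j) = x j := by
  have hιπ : ∀ i ∈ S, ι (π i) = i := fun i hi => hπ (hιS _) hi (hι _)
  refine exists_congr fun w => and_congr_right fun _ => ⟨fun h j => ?_, fun h i hi => ?_⟩
  · simpa [hι j] using h (ι j) (hιS j)
  · rw [← h, hιπ i hi]

end minorOn

section split

variable {M n : ℕ} {R' : Set (Tuple k M)} {S : Finset (Fin M)} {π : Fin M → Fin n}

theorem mem_minorOn_of_forall_erase
    (hsplit : ∀ m (τ : Fin M → Fin (n + m)), 0 < m → ¬ Essential k ⟨n + m, minorOn R' S τ⟩)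
    {x : Tuple k n} (hx : ∀ i, ∃ s, Function.update x i s ∈ minorOn R' S π)
    {p q : Fin M} (hp : p ∈ S) (hq : q ∈ S) (hpq : p ≠ q) (hπ : π p = π q)
    (herase : ∀ c ∈ S, x ∈ minorOn R' (S.erase c) π) : x ∈ minorOn R' S π := by
  classical
  -- give every `i ≠ q` of the fibre of `j` its own new coordinate; `σ` merges them back into `j`
  set j := π q
  set E := (S.filter (π · = j)).erase q
  have hE : ∀ {i}, i ∈ E ↔ i ≠ q ∧ i ∈ S ∧ π i = j := by simp [E]
  let e := E.equivFin
  let τ : Fin M → Fin (n + E.card) := fun i =>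
    if h : i ∈ E then Fin.natAdd n (e ⟨i, h⟩) else Fin.castAdd _ (π i)
  let σ : Fin (n + E.card) → Fin n := Fin.append id fun _ => j
  have hστ : ∀ i, σ (τ i) = π i := by
    intro i
    by_cases hi : i ∈ E
    · simp [σ, τ, hi, (hE.1 hi).2.2]
    · simp [σ, τ, hi]
  have hτ : ∀ i ∈ S, ∀ c ∈ S, π c = j → τ i = τ c → i = c := by
    intro i hi c hc hcj hic
    have hij : π i = j := by rw [← hστ, hic, hστ, hcj]
    by_cases hiE : i ∈ E <;> by_cases hcE : c ∈ E <;>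
      simp only [τ, hiE, hcE, dite_true, dite_false] at hic
    · simpa using e.injective ((Fin.natAdd_inj _).1 hic)
    · exact absurd hic.symm (Fin.castAdd_ne_natAdd _ _)
    · exact absurd hic (Fin.castAdd_ne_natAdd _ _)
    · have hfibre : ∀ i ∈ S, π i = j → i ∉ E → i = q :=
        fun i hi hij hiE => by_contra fun hiq => hiE (hE.2 ⟨hiq, hi, hij⟩)
      exact (hfibre i hi hij hiE).trans (hfibre c hc hcj hcE).symm
  -- the arity exceeds `n`, so `x ∘ σ` cannot be a hole: every coordinate of it can be repaired
  rw [← comp_mem_minorOn_iff hστ]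
  by_contra hxσ
  refine hsplit _ τ (Finset.card_pos.2 ⟨p, hE.2 ⟨hpq, hp, hπ⟩⟩)
    (essential_iff_exists_hole.2 ⟨x ∘ σ, hxσ, fun r => ?_⟩)
  refine Fin.addCases (fun a => ?_) (fun t => ?_) r
  · by_cases ha : a = j
    · have hτq : τ q = Fin.castAdd _ j := by simp [τ, hE]; rfl
      rw [ha, ← hτq]
      exact exists_update_comp_mem_minorOn hστ hq (fun i hi => hτ i hi q hq rfl) (herase q hq)
    · obtain ⟨s, hs⟩ := hx a
      exact ⟨s, update_comp_append_const x ha s ▸ (comp_mem_minorOn_iff hστ _).2 hs⟩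
  · obtain ⟨-, hcS, hcj⟩ := hE.1 (e.symm t).2
    have hτc : τ (e.symm t) = Fin.natAdd n t := by simp [τ]
    rw [← hτc]
    exact exists_update_comp_mem_minorOn hστ hcS (fun i hi => hτ i hi _ hcS hcj) (herase _ hcS)

end split

section maximal

variable {G : Set (Pred k)} {n : ℕ} {R : Set (Tuple k n)}

theorem not_essential_of_arity_lt (hmax : (⟨n, R⟩ : Pred k) ∈ MAXset k G) {ρ : Pred k}
    (hρ : ρ ∈ ppClosure k G) (hlt : n < ρ.1) : ¬ Essential k ρ :=
  fun hess => absurd (hmax.2.2.1 ρ hρ hess) (not_le.2 hlt)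

theorem eq_or_mem_of_subset (hmax : (⟨n, R⟩ : Pred k) ∈ MAXset k G) {xs : Tuple k n}
    (hupd : ∀ i, ∃ s, Function.update xs i s ∈ R) {T : Set (Tuple k n)}
    (hT : (⟨n, T⟩ : Pred k) ∈ ppClosure k G) (hRT : R ⊆ T) : T = R ∨ xs ∈ T := by
  by_cases hess : Essential k ⟨n, T⟩
  · left
    have := hmax.2.2.2 _ hT hess ⟨rfl, fun x hx => hRT hx⟩
    exact (eq_of_heq (Sigma.mk.inj this).2).symm
  · right
    by_contra hxT
    exact hess (essential_iff_exists_hole.2 ⟨xs, hxT, fun i => (hupd i).imp fun _ hs => hRT hs⟩)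

theorem exists_minorOn_erase_eq (hmax : (⟨n, R⟩ : Pred k) ∈ MAXset k G) {M : ℕ}
    {R' : Set (Tuple k M)} (hR' : (⟨M, R'⟩ : Pred k) ∈ ppClosure k G) {S : Finset (Fin M)}
    {π : Fin M → Fin n} (hS : minorOn R' S π = R) {p q : Fin M} (hp : p ∈ S) (hq : q ∈ S)
    (hpq : p ≠ q) (hπ : π p = π q) : ∃ c ∈ S, minorOn R' (S.erase c) π = R := by
  obtain ⟨xs, hxs, hupd⟩ := essential_iff_exists_hole.1 hmax.2.1
  by_contra! hne
  subst hS
  refine hxs (mem_minorOn_of_forall_erase (fun m τ hm => ?_) hupd hp hq hpq hπ fun c hc => ?_)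
  · exact not_essential_of_arity_lt hmax (minorOn_mem_ppClosure hR' S τ) (by simpa using hm)
  · exact (eq_or_mem_of_subset hmax hupd (minorOn_mem_ppClosure hR' _ π)
      (minorOn_anti (S.erase_subset c) π)).resolve_left (hne c hc)

end maximal

theorem mk_mem_strike_of_leftInverse {M n : ℕ} {R : Set (Tuple k n)} {R' : Set (Tuple k M)}
    {ι : Fin n → Fin M} {π : Fin M → Fin n} (hι : Function.LeftInverse π ι)
    (hR : ∀ x, x ∈ R ↔ ∃ w ∈ R', ∀ j, w (ι j) = x j) :
    (⟨n, R⟩ : Pred k) ∈ strike k ⟨M, R'⟩ := by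
  classical
  let z : Fin M → Fin (n + M) := fun i =>
    if ι (π i) = i then Fin.castAdd M (π i) else Fin.natAdd n i
  have hz : Function.Injective z := by
    intro a b hab
    by_cases ha : ι (π a) = a <;> by_cases hb : ι (π b) = b <;>
      simp only [z, ha, hb, if_true, if_false] at hab
    · rw [← ha, ← hb, Fin.castAdd_inj.1 hab]
    · exact absurd hab (Fin.castAdd_ne_natAdd _ _)
    · exact absurd hab.symm (Fin.castAdd_ne_natAdd _ _)
    · exact (Fin.natAdd_inj _).1 hab
  refine ⟨M, z, hz, fun x => (hR x).trans ⟨?_, ?_⟩⟩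
  · rintro ⟨w, hw, hwx⟩
    refine ⟨w, ?_⟩
    convert hw using 1
    funext i
    by_cases hi : ι (π i) = i
    · simp only [z, hi, if_true, Fin.append_left]
      rw [← hwx, hi]
    · simp [z, hi]
  · rintro ⟨y, hy⟩
    exact ⟨_, hy, fun j => by simp [z, hι j]⟩

theorem max_identification_of_variables_general (k M n : ℕ)
    (G : Set (Pred k))
    (blk : Fin M → Fin n)
    (R : Set (Tuple k n)) (R' : Set (Tuple k M))
    (hmax : (⟨n, R⟩ : Pred k) ∈ MAXset k G)
    (hmem : (⟨M, R'⟩ : Pred k) ∈ ppClosure k G)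
    (hid : ∀ x : Tuple k n, x ∈ R ↔ (x ∘ blk) ∈ R') :
    ∃ ι : Fin n → Fin M,
      (∀ j, blk (ι j) = j) ∧
      (∀ x : Tuple k n, x ∈ R ↔ ∃ w ∈ R', ∀ j, w (ι j) = x j) ∧
      (⟨n, R⟩ : Pred k) ∈ strike k ⟨M, R'⟩ := by
  have huniv : minorOn R' Finset.univ blk = R := by
    ext x
    simp only [minorOn, Set.mem_ofPred_eq, Finset.mem_univ, forall_const, hid]
    exact ⟨fun ⟨w, hw, hwx⟩ => (funext hwx : w = x ∘ blk) ▸ hw, fun hx => ⟨_, hx, fun _ => rfl⟩⟩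
  obtain ⟨S, hSmin⟩ :=
    exists_minimal_of_wellFoundedLT (fun S => minorOn R' S blk = R) ⟨_, huniv⟩
  have hSR : minorOn R' S blk = R := hSmin.prop
  have hinj : Set.InjOn blk S := by
    intro p hp q hq hpq
    by_contra hne
    obtain ⟨c, hc, hcR⟩ := exists_minorOn_erase_eq hmax hmem hSR hp hq hne hpq
    exact hSmin.not_lt hcR (Finset.erase_ssubset hc)
  have hcover : ∀ j, ∃ i ∈ S, blk i = j := by
    obtain ⟨xs, hxs, hupd⟩ := essential_iff_exists_hole.1 hmax.2.1
    intro j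
    obtain ⟨s, hs⟩ := hupd j
    rw [← hSR] at hxs hs
    exact exists_mem_of_update_mem_minorOn hxs hs
  choose ι hιS hι using hcover
  have hR : ∀ x, x ∈ R ↔ ∃ w ∈ R', ∀ j, w (ι j) = x j := fun x => by
    rw [← hSR, mem_minorOn_iff_of_leftInverse hιS hι hinj]
  exact ⟨ι, hι, hR, mk_mem_strike_of_leftInverse hι hR⟩

theorem max_identification_of_variables (k M n : ℕ) (hk : 2 ≤ k)
    (G : Set (Pred k))
    (hfin : { ρ ∈ ppClosure k G | Essential k ρ }.Finite)
    (blk : Fin M → Fin n) (hmono : Monotone blk) (hsurj : Function.Surjective blk)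
    (R : Set (Tuple k n)) (R' : Set (Tuple k M))
    (hmax : (⟨n, R⟩ : Pred k) ∈ MAXset k G)
    (hmem : (⟨M, R'⟩ : Pred k) ∈ ppClosure k G)
    (hid : ∀ x : Tuple k n, x ∈ R ↔ (x ∘ blk) ∈ R') :
    ∃ ι : Fin n → Fin M,
      (∀ j, blk (ι j) = j) ∧
      (∀ x : Tuple k n, x ∈ R ↔ ∃ w ∈ R', ∀ j, w (ι j) = x j) ∧
      (⟨n, R⟩ : Pred k) ∈ strike k ⟨M, R'⟩ :=
  max_identification_of_variables_general k M n G blk R R' hmax hmem hid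
end

section
/- Let k ≥ 2, let G ⊆ R_k, and let n ∈ ℕ. Then ar([G] ∩ R̃_k) ≤ n if and only if ar([G ∪ SR_k] ∩ R̃_k) ≤ n; moreover, [G] ∩ R̃_k is finite if and only if [G ∪ SR_k] ∩ R̃_k is finite. -/
/-!
A pp-definition over `G ∪ SR_k` becomes one over `G` once every conjunct `x = a` is replaced by
an equality `x = c_a` with a fresh free variable `c_a`; hence `ρ(x) = S(x, 0, 1, …, k-1)` for
some `S ∈ [G]`. A predicate is essential iff some tuple `w ∉ ρ` can be moved into `ρ` by changing
any single coordinate. Extend such a `w` for `ρ` by the constants. As long as `S` is not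
essential, some coordinate of `w` cannot be repaired; it is one of the constant coordinates, and
quantifying it away keeps `w` outside while every coordinate of `x` stays repairable. This ends
with an essential predicate of `[G]` of arity at least that of `ρ`. Finiteness is bounded arity,
as there are only finitely many predicates of each arity.
-/

open Function

lemma Fin.comp_insertNth {α β : Type*} {n : ℕ} (f : α → β) (j : Fin (n + 1)) (x : α)
    (p : Fin n → α) : f ∘ j.insertNth x p = j.insertNth (f x) (f ∘ p) := by
  ext t
  rcases j.eq_self_or_eq_succAbove t with rfl | ⟨t, rfl⟩ <;> simp

lemma Fin.append_update_left {α : Type*} {m n : ℕ} [DecidableEq α] (x : Fin m → α) (a : Fin n → α)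
    (i : Fin m) (c : α) :
    Fin.append (update x i c) a = update (Fin.append x a) (Fin.castAdd n i) c := by
  ext t
  induction t using Fin.addCases with
  | left t => simp [update_apply]
  | right t => simp [update_apply, Fin.ext_iff]; omega

def Fin.skipMiddle (m p l : ℕ) : Fin (m + l) → Fin (m + p + l) :=
  Fin.append (Fin.castAdd l ∘ Fin.castAdd p) (Fin.natAdd (m + p))

lemma Fin.append_append_comp_skipMiddle {α : Type*} {m p l : ℕ} (x : Fin m → α) (a : Fin p → α)
    (y : Fin l → α) : Fin.append (Fin.append x a) y ∘ Fin.skipMiddle m p l = Fin.append x y := by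
  ext t
  induction t using Fin.addCases with
  | left t => simp [Fin.skipMiddle]
  | right t => simp [Fin.skipMiddle]

variable {k : ℕ} {G : Set (Pred k)}

lemma ppClosure_mono {G' : Set (Pred k)} (h : G ⊆ G') : ppClosure k G ⊆ ppClosure k G' := by
  rintro ρ ⟨l, s, σ, z, hσ, hiff⟩
  exact ⟨l, s, σ, z, fun i => Set.union_subset_union_left _ h (hσ i), hiff⟩

/-- Variables of the composite definition are `(v, y, y₂)`: the free variables of the inner
definition are read through `e` and its bound variables `y₂` stay bound. -/
def remapVars (M l l₂ : ℕ) {N : ℕ} (e : Fin N → Fin (M + l)) :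
    Fin (N + l₂) → Fin (M + (l + l₂)) :=
  Fin.append (Fin.append (Fin.castAdd (l + l₂)) (Fin.natAdd M ∘ Fin.castAdd l₂) ∘ e)
    (Fin.natAdd M ∘ Fin.natAdd l)

lemma append_append_remapVars {M l l₂ N : ℕ} (e : Fin N → Fin (M + l)) (v : Tuple k M)
    (y : Tuple k l) (y₂ : Tuple k l₂) (w : Fin (N + l₂)) :
    Fin.append v (Fin.append y y₂) (remapVars M l l₂ e w) = Fin.append (Fin.append v y ∘ e) y₂ w := by
  induction w using Fin.addCases with
  | left t =>
    simp only [remapVars, comp_apply, Fin.append_left]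
    induction e t using Fin.addCases with
    | left i => simp
    | right i => simp
  | right t => simp [remapVars]

lemma ppClosure_exists_comp_append {N M l : ℕ} {S : Set (Tuple k N)}
    (hS : (⟨N, S⟩ : Pred k) ∈ ppClosure k G) (e : Fin N → Fin (M + l)) :
    (⟨M, {v | ∃ y : Tuple k l, Fin.append v y ∘ e ∈ S}⟩ : Pred k) ∈ ppClosure k G := by
  obtain ⟨l₂, s, σ, z, hσ, hiff⟩ := hS
  refine ⟨l + l₂, s, σ, fun i j => remapVars M l l₂ e (z i j), hσ, fun v => ?_⟩
  simp only [Set.mem_ofPred_eq, hiff]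
  constructor
  · rintro ⟨y, y₂, h⟩
    refine ⟨Fin.append y y₂, fun i => ?_⟩
    simpa only [append_append_remapVars] using h i
  · rintro ⟨y', h⟩
    refine ⟨fun i => y' (Fin.castAdd l₂ i), fun i => y' (Fin.natAdd l i), fun i => ?_⟩
    rw [← Fin.append_castAdd_natAdd (f := y')] at h
    simpa only [append_append_remapVars] using h i

lemma ppClosure_exists_insertNth {N : ℕ} {S : Set (Tuple k (N + 1))}
    (hS : (⟨N + 1, S⟩ : Pred k) ∈ ppClosure k G) (j : Fin (N + 1)) :
    (⟨N, {v | ∃ c, j.insertNth c v ∈ S}⟩ : Pred k) ∈ ppClosure k G := by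
  convert ppClosure_exists_comp_append hS (j.insertNth (Fin.last N) Fin.castSucc) using 4
  simp only [Fin.comp_insertNth, Fin.append_right_eq_snoc, Fin.snoc_last, Fin.snoc_comp_castSucc]
  exact ⟨fun ⟨c, h⟩ => ⟨fun _ => c, h⟩, fun ⟨y, h⟩ => ⟨y 0, h⟩⟩

lemma essential_iff_exists_update_mem {N : ℕ} {S : Set (Tuple k N)} :
    Essential k ⟨N, S⟩ ↔ ∃ w ∉ S, ∀ i, ∃ c, update w i c ∈ S := by
  constructor
  · intro hess
    by_contra! h
    apply hess
    cases N with
    | zero =>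
      refine ⟨0, Fin.elim0, fun i => i.elim0, fun i => i.elim0, fun i => i.elim0, fun w => ?_⟩
      exact ⟨fun _ i => i.elim0, fun _ => by_contra fun hw => (h w hw).elim fun i => i.elim0⟩
    | succ r =>
      refine ⟨r + 1, fun i => ⟨r, i.removeNth '' S⟩, fun i => i.succAbove, fun _ => r.lt_succ_self,
        fun _ => Fin.succAbove_right_injective, fun w => ⟨fun hw i => ⟨w, hw, rfl⟩, fun hw => ?_⟩⟩
      by_contra hwS
      obtain ⟨i, hi⟩ := h w hwS
      obtain ⟨w', hw'S, hw'⟩ := hw i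
      have hw' : i.removeNth w' = i.removeNth w := hw'
      apply hi (w' i)
      rwa [← Fin.insertNth_removeNth, ← hw', Fin.insertNth_self_removeNth]
  · rintro ⟨w, hwS, hupd⟩ ⟨s, σ, z, hlt, -, hiff⟩
    refine hwS ((hiff w).2 fun t => ?_)
    obtain ⟨i, hi⟩ : ∃ i, i ∉ Set.range (z t) := by
      by_contra! hsurj
      have := Fintype.card_le_of_surjective _ hsurj
      simp only [Fintype.card_fin] at this
      exact (hlt t).not_ge this
    obtain ⟨c, hc⟩ := hupd i
    have hagree : (fun j => update w i c (z t j)) = fun j => w (z t j) :=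
      funext fun j => update_of_ne (fun h => hi ⟨j, h⟩) _ _
    simpa only [hagree] using (hiff _).1 hc t

lemma exists_conjunct_avoiding_SR {N N' : ℕ} (e : Fin N → Fin N') (c : Fin k → Fin N')
    {σ : Pred k} (hσ : σ ∈ G ∪ SR k ∪ {eqPred k, falsePred k}) (z : Fin σ.1 → Fin N) :
    ∃ τ ∈ G ∪ {eqPred k, falsePred k}, ∃ z' : Fin τ.1 → Fin N', ∀ v : Tuple k N',
      (∀ a, v (c a) = a) → ((fun j => v (z' j)) ∈ τ.2 ↔ (fun j => v (e (z j))) ∈ σ.2) := by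
  rcases hσ with (hG | ⟨a, rfl⟩) | hσ
  · exact ⟨σ, Or.inl hG, e ∘ z, fun _ _ => Iff.rfl⟩
  · refine ⟨eqPred k, Or.inr (Or.inl rfl), ![e (z 0), c a], fun v hv => ?_⟩
    show v (e (z 0)) = v (c a) ↔ v (e (z 0)) = a
    rw [hv]
  · exact ⟨σ, Or.inr hσ, e ∘ z, fun _ _ => Iff.rfl⟩

/-- The tuple `id : Fin k → Fin k` lists the constants `0, 1, …, k-1`. -/
lemma exists_ppClosure_append_id {ρ : Pred k} (hρ : ρ ∈ ppClosure k (G ∪ SR k)) :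
    ∃ S : Set (Tuple k (ρ.1 + k)), (⟨ρ.1 + k, S⟩ : Pred k) ∈ ppClosure k G ∧
      ∀ x, x ∈ ρ.2 ↔ Fin.append x id ∈ S := by
  obtain ⟨l, s, σ, z, hσ, hiff⟩ := hρ
  choose τ hτ z' hz' using fun i =>
    exists_conjunct_avoiding_SR (Fin.skipMiddle ρ.1 k l) (fun a => Fin.castAdd l (Fin.natAdd ρ.1 a))
      (hσ i) (z i)
  refine ⟨{w | ∃ y : Tuple k l, ∀ i, (fun j => Fin.append w y (z' i j)) ∈ (τ i).2},
    ⟨l, s, τ, z', hτ, fun _ => Iff.rfl⟩, fun x => ?_⟩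
  rw [hiff]
  refine exists_congr fun y => forall_congr' fun i => ?_
  rw [hz' i _ fun a => by simp]
  simp only [← comp_apply (f := Fin.append (Fin.append x id) y), Fin.append_append_comp_skipMiddle]

theorem exists_essential_of_update_mem {N : ℕ} {S : Set (Tuple k N)}
    (hS : (⟨N, S⟩ : Pred k) ∈ ppClosure k G) {w : Tuple k N} (hw : w ∉ S) (I : Finset (Fin N))
    (hI : ∀ i ∈ I, ∃ c, update w i c ∈ S) :
    ∃ τ ∈ ppClosure k G, Essential k τ ∧ I.card ≤ τ.1 := by
  induction N with
  | zero => exact ⟨_, hS, essential_iff_exists_update_mem.2 ⟨w, hw, fun i => i.elim0⟩,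
      I.card_le_univ.trans_eq (Fintype.card_fin _)⟩
  | succ N ih =>
    by_cases hall : ∀ i, ∃ c, update w i c ∈ S
    · exact ⟨_, hS, essential_iff_exists_update_mem.2 ⟨w, hw, hall⟩,
        I.card_le_univ.trans_eq (Fintype.card_fin _)⟩
    obtain ⟨j, hj⟩ : ∃ j, ∀ c, update w j c ∉ S := by simpa using hall
    have hjI : j ∉ I := fun h => (hI j h).elim hj
    let I' := Finset.univ.filter fun i => j.succAbove i ∈ I
    have hcard : I.card ≤ I'.card := by
      rw [← Finset.card_map j.succAboveEmb]
      refine Finset.card_le_card fun i hi => ?_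
      obtain ⟨i', rfl⟩ := Fin.exists_succAbove_eq (ne_of_mem_of_not_mem hi hjI)
      simpa [I'] using hi
    have hI' : ∀ i ∈ I', ∃ c, update (j.removeNth w) i c ∈ {v | ∃ c, j.insertNth c v ∈ S} := by
      intro i hi
      obtain ⟨c, hc⟩ := hI _ (Finset.mem_filter.1 hi).2
      exact ⟨c, w j, by simpa [Fin.insertNth_update] using hc⟩
    obtain ⟨τ, hτ, hess, hle⟩ :=
      ih (ppClosure_exists_insertNth hS j) (w := j.removeNth w) (by simpa using hj) I' hI'
    exact ⟨τ, hτ, hess, hcard.trans hle⟩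

theorem exists_essential_arity_ge {ρ : Pred k} (hρ : ρ ∈ ppClosure k (G ∪ SR k))
    (hess : Essential k ρ) : ∃ τ ∈ ppClosure k G, Essential k τ ∧ ρ.1 ≤ τ.1 := by
  obtain ⟨S, hS, hρS⟩ := exists_ppClosure_append_id hρ
  obtain ⟨x, hx, hupd⟩ := essential_iff_exists_update_mem.1 hess
  have hupd' : ∀ i ∈ Finset.univ.map (Fin.castAddEmb k),
      ∃ c, update (Fin.append x id) i c ∈ S := by
    simp only [Finset.mem_map, Finset.mem_univ, true_and, Fin.castAddEmb_apply,
      forall_exists_index, forall_apply_eq_imp_iff]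
    intro i
    obtain ⟨c, hc⟩ := hupd i
    exact ⟨c, by rwa [← Fin.append_update_left, ← hρS]⟩
  simpa using exists_essential_of_update_mem hS (by rwa [← hρS]) _ hupd'

lemma Pred.finite_iff_exists_arity_le {P : Set (Pred k)} :
    P.Finite ↔ ∃ n, ∀ ρ ∈ P, ρ.1 ≤ n := by
  refine ⟨fun h => ?_, fun ⟨n, hn⟩ => ?_⟩
  · obtain ⟨n, hn⟩ := (h.image Sigma.fst).bddAbove
    exact ⟨n, fun ρ hρ => hn ⟨ρ, hρ, rfl⟩⟩
  · refine ((Set.finite_Iic n).preimage' fun r _ => ?_).subset hn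
    refine (Set.finite_range (Sigma.mk r)).subset ?_
    rintro ⟨r, T⟩ rfl
    exact ⟨T, rfl⟩

theorem essential_with_SR_general (k : ℕ) (G : Set (Pred k)) (n : ℕ) :
    ((∀ ρ ∈ ppClosure k G, Essential k ρ → ρ.1 ≤ n) ↔
      (∀ ρ ∈ ppClosure k (G ∪ SR k), Essential k ρ → ρ.1 ≤ n)) ∧
    ({ ρ ∈ ppClosure k G | Essential k ρ }.Finite ↔
      { ρ ∈ ppClosure k (G ∪ SR k) | Essential k ρ }.Finite) := by
  have hmono : ppClosure k G ⊆ ppClosure k (G ∪ SR k) := ppClosure_mono Set.subset_union_left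
  have hbound : ∀ n, (∀ ρ ∈ ppClosure k G, Essential k ρ → ρ.1 ≤ n) →
      ∀ ρ ∈ ppClosure k (G ∪ SR k), Essential k ρ → ρ.1 ≤ n := fun n H ρ hρ hess =>
    let ⟨τ, hτ, hτess, hle⟩ := exists_essential_arity_ge hρ hess
    hle.trans (H τ hτ hτess)
  refine ⟨⟨hbound n, fun H ρ hρ => H ρ (hmono hρ)⟩, ?_⟩
  simp only [Pred.finite_iff_exists_arity_le, Set.mem_ofPred_eq, and_imp]
  exact ⟨fun ⟨m, H⟩ => ⟨m, hbound m H⟩, fun ⟨m, H⟩ => ⟨m, fun ρ hρ => H ρ (hmono hρ)⟩⟩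

theorem essential_with_SR (k : ℕ) (hk : 2 ≤ k) (G : Set (Pred k)) (n : ℕ) :
    ((∀ ρ ∈ ppClosure k G, Essential k ρ → ρ.1 ≤ n) ↔
      (∀ ρ ∈ ppClosure k (G ∪ SR k), Essential k ρ → ρ.1 ≤ n)) ∧
    ({ ρ ∈ ppClosure k G | Essential k ρ }.Finite ↔
      { ρ ∈ ppClosure k (G ∪ SR k) | Essential k ρ }.Finite) :=
  essential_with_SR_general k G n
end
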